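/- arXiv:1807.00663 — 9 statements merged into one kernel-verified Lean document; each statement's English description precedes it below -/
import Mathlib

section
/- Let n1, n2 ≥ 2 be integers. For all regular languages L1 and L2 over a common finite alphabet Σ with sc(L1) ≤ n1 and sc(L2) ≤ n2, the state complexity of the Kleene star of their intersection satisfies sc((L1 ∩ L2)*) ≤ 3·2^(n1·n2−2). -/
open Computability

/-- `L` is recognized by some complete DFA with exactly `n` states. -/
def recognizedBy {α : Type} (L : Language α) (n : ℕ) : Prop :=
  ∃ M : DFA α (Fin n), M.accepts = L

/-- The state complexity of a language: the minimal number of states of a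
complete DFA recognizing it. -/
noncomputable def sc {α : Type} (L : Language α) : ℕ :=
  sInf {n | recognizedBy L n}


/-!
The product of minimal automata for `L1` and `L2` recognizes `L1 ⊓ L2` with at most `n1 * n2`
states, so it suffices to bound `sc L∗` by `3 * 2 ^ (m - 2)` when `L` is accepted by a DFA `M`
with `m` states and initial state `s`. The subset construction for `L∗` only reaches sets that
contain `s` as soon as they contain an accepting state. If `M` has an accepting state `f ≠ s`,
this rules out the `2 ^ (m - 2)` sets containing `f` but not `s`, which leaves `3 * 2 ^ (m - 2)`
states. Otherwise `s` is the only possible accepting state, every reached set has at most one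
element, and there are at most `m + 1 ≤ 3 * 2 ^ (m - 2)` states.
-/

namespace Language

variable {α : Type*} {l : Language α} {u v w : List α}

theorem append_mem_kstar (hu : u ∈ l∗) (hv : v ∈ l) : u ++ v ∈ l∗ :=
  kstar_mul_le_kstar (a := l) (append_mem_mul hu hv)

theorem mem_kstar_iff_exists_append_of_ne_nil (hw : w ≠ []) :
    w ∈ l∗ ↔ ∃ u v, u ++ v = w ∧ u ∈ l∗ ∧ v ∈ l := by
  conv_lhs => rw [← one_add_kstar_mul_self_eq_kstar]
  rw [mem_add, mem_one, mem_mul]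
  simp only [hw, false_or]
  exact ⟨fun ⟨u, hu, v, hv, huv⟩ => ⟨u, v, huv, hu, hv⟩,
    fun ⟨u, v, huv, hu, hv⟩ => ⟨u, hu, v, hv, huv⟩⟩

theorem append_singleton_mem_kstar_iff {a : α} :
    w ++ [a] ∈ l∗ ↔ ∃ u v, u ++ v = w ∧ u ∈ l∗ ∧ v ++ [a] ∈ l := by
  refine ⟨fun h => ?_, fun ⟨u, v, huv, hu, hv⟩ => huv ▸ by simpa using append_mem_kstar hu hv⟩
  obtain ⟨S, hS, hne⟩ := mem_kstar_iff_exists_nonempty.mp h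
  obtain rfl | ⟨S, y, rfl⟩ := S.eq_nil_or_concat'
  · simp at hS
  obtain ⟨hy, hy0⟩ := hne y (by simp)
  obtain rfl | ⟨v, b, rfl⟩ := y.eq_nil_or_concat'
  · exact absurd rfl hy0
  rw [List.flatten_concat, ← List.append_assoc] at hS
  obtain ⟨rfl, hab⟩ := List.append_inj' hS rfl
  obtain rfl : a = b := by simpa using hab
  exact ⟨S.flatten, v, rfl, join_mem_kstar fun y hy => (hne y (by simp [hy])).1, hy⟩

end Language

namespace DFA

variable {α σ : Type*}

section restrict

variable (M : DFA α σ) (P : σ → Prop) (h₀ : P M.start) (h : ∀ s a, P s → P (M.step s a))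

def restrict : DFA α {s // P s} where
  step s a := ⟨M.step s a, h s a s.2⟩
  start := ⟨M.start, h₀⟩
  accept := Subtype.val ⁻¹' M.accept

theorem coe_evalFrom_restrict (s : {s // P s}) (x : List α) :
    ((M.restrict P h₀ h).evalFrom s x : σ) = M.evalFrom s x := by
  induction x generalizing s with
  | nil => rfl
  | cons a x ih => exact ih _

theorem accepts_restrict : (M.restrict P h₀ h).accepts = M.accepts := by
  ext x
  exact Iff.of_eq (congrArg (· ∈ M.accept) (M.coe_evalFrom_restrict P h₀ h _ x))

end restrict

variable (M : DFA α σ)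

def kstarReach (w : List α) : Set σ :=
  {q | ∃ u v, u ++ v = w ∧ u ∈ M.accepts∗ ∧ M.evalFrom M.start v = q}

theorem kstarReach_nil : M.kstarReach [] = {M.start} := by
  ext q
  simp [kstarReach, Language.nil_mem_kstar, eq_comm]

theorem kstarReach_nonempty (w : List α) : (M.kstarReach w).Nonempty :=
  ⟨_, [], w, rfl, Language.nil_mem_kstar _, rfl⟩

theorem mem_kstarReach_append_singleton {w : List α} {a : α} {q : σ} :
    q ∈ M.kstarReach (w ++ [a]) ↔
      (w ++ [a] ∈ M.accepts∗ ∧ q = M.start) ∨ ∃ p ∈ M.kstarReach w, M.step p a = q := by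
  constructor
  · rintro ⟨u, v, huv, hu, rfl⟩
    obtain rfl | ⟨v, b, rfl⟩ := v.eq_nil_or_concat'
    · rw [List.append_nil] at huv
      exact .inl ⟨huv ▸ hu, rfl⟩
    rw [← List.append_assoc] at huv
    obtain ⟨rfl, hab⟩ := List.append_inj' huv rfl
    obtain rfl : b = a := by simpa using hab
    exact .inr ⟨_, ⟨u, v, rfl, hu, rfl⟩, (evalFrom_append_singleton ..).symm⟩
  · rintro (⟨hw, rfl⟩ | ⟨p, ⟨u, v, rfl, hu, rfl⟩, rfl⟩)
    · exact ⟨w ++ [a], [], List.append_nil _, hw, rfl⟩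
    · exact ⟨u, v ++ [a], (List.append_assoc ..).symm, hu, evalFrom_append_singleton ..⟩

theorem exists_mem_kstarReach_step_mem_accept_iff {w : List α} {a : α} :
    (∃ p ∈ M.kstarReach w, M.step p a ∈ M.accept) ↔ w ++ [a] ∈ M.accepts∗ := by
  rw [Language.append_singleton_mem_kstar_iff]
  constructor
  · rintro ⟨_, ⟨u, v, huv, hu, rfl⟩, hacc⟩
    exact ⟨u, v, huv, hu, by rwa [mem_accepts, eval, evalFrom_append_singleton]⟩
  · rintro ⟨u, v, huv, hu, hv⟩
    exact ⟨_, ⟨u, v, huv, hu, rfl⟩, by rwa [mem_accepts, eval, evalFrom_append_singleton] at hv⟩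

theorem exists_mem_kstarReach_mem_accept_iff {w : List α} (hw : w ≠ []) :
    (∃ q ∈ M.kstarReach w, q ∈ M.accept) ↔ w ∈ M.accepts∗ := by
  rw [Language.mem_kstar_iff_exists_append_of_ne_nil hw]
  constructor
  · rintro ⟨_, ⟨u, v, huv, hu, rfl⟩, hacc⟩
    exact ⟨u, v, huv, hu, hacc⟩
  · rintro ⟨u, v, huv, hu, hv⟩
    exact ⟨_, ⟨u, v, huv, hu, rfl⟩, hv⟩

variable [DecidableEq σ]

open Classical in
noncomputable def kstarStep (S : Finset σ) (a : α) : Finset σ :=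
  if ∃ q ∈ S, M.step q a ∈ M.accept then insert M.start (S.image (M.step · a))
  else S.image (M.step · a)

theorem coe_kstarStep {S : Finset σ} {w : List α} {a : α} (hS : (S : Set σ) = M.kstarReach w) :
    (M.kstarStep S a : Set σ) = M.kstarReach (w ++ [a]) := by
  have hcond : (∃ q ∈ S, M.step q a ∈ M.accept) ↔ w ++ [a] ∈ M.accepts∗ := by
    rw [← exists_mem_kstarReach_step_mem_accept_iff, ← hS]
    rfl
  ext q
  rw [mem_kstarReach_append_singleton, ← hS, ← hcond]
  unfold kstarStep
  split_ifs with h <;> simp [h]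

theorem start_mem_kstarStep {S : Finset σ} {a : α} {q : σ} (hq : q ∈ M.kstarStep S a)
    (hqF : q ∈ M.accept) : M.start ∈ M.kstarStep S a := by
  unfold kstarStep at *
  split_ifs at hq ⊢ with h
  · exact Finset.mem_insert_self ..
  · obtain ⟨p, hp, rfl⟩ := Finset.mem_image.mp hq
    exact absurd ⟨p, hp, hqF⟩ h

theorem card_kstarStep_le_one (hF : ∀ q ∈ M.accept, q = M.start) {S : Finset σ}
    (hS : S.card ≤ 1) (a : α) : (M.kstarStep S a).card ≤ 1 := by
  unfold kstarStep
  split_ifs with h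
  · obtain ⟨p, hp, hpF⟩ := h
    rw [Finset.insert_eq_of_mem (hF _ hpF ▸ Finset.mem_image_of_mem _ hp)]
    exact Finset.card_image_le.trans hS
  · exact Finset.card_image_le.trans hS

/-- The empty set serves as a fresh accepting initial state: after a nonempty word `w` the state
is `M.kstarReach w`, which is never empty. -/
noncomputable def kstar : DFA α (Finset σ) where
  step S a := M.kstarStep (if S = ∅ then {M.start} else S) a
  start := ∅
  accept := {S | S = ∅ ∨ ∃ q ∈ S, q ∈ M.accept}

theorem coe_eval_kstar {w : List α} (hw : w ≠ []) :
    (M.kstar.eval w : Set σ) = M.kstarReach w := by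
  induction w using List.reverseRecOn with
  | nil => exact absurd rfl hw
  | append_singleton w a ih =>
    rw [eval_append_singleton]
    apply coe_kstarStep
    rcases eq_or_ne w [] with rfl | hw
    · simp [kstar, kstarReach_nil]
    · have hne : M.kstar.eval w ≠ ∅ :=
        Finset.nonempty_iff_ne_empty.mp (Finset.coe_nonempty.mp (ih hw ▸ M.kstarReach_nonempty w))
      rw [if_neg hne, ih hw]

theorem accepts_kstar : M.kstar.accepts = M.accepts∗ := by
  ext w
  rcases eq_or_ne w [] with rfl | hw
  · simp [mem_accepts, kstar, Language.nil_mem_kstar]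
  have h := M.coe_eval_kstar hw
  have hne : M.kstar.eval w ≠ ∅ :=
    Finset.nonempty_iff_ne_empty.mp (Finset.coe_nonempty.mp (h ▸ M.kstarReach_nonempty w))
  rw [mem_accepts, ← M.exists_mem_kstarReach_mem_accept_iff hw, ← h]
  change M.kstar.eval w = ∅ ∨ _ ↔ _
  simp [hne]

end DFA

section count

variable {σ : Type*} [Fintype σ]

theorem Fintype.card_finset_mem_imp_mem [DecidableEq σ] {s f : σ} (hsf : s ≠ f) :
    Fintype.card {S : Finset σ // f ∈ S → s ∈ S} = 3 * 2 ^ (Fintype.card σ - 2) := by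
  have hm : 2 ≤ Fintype.card σ := Fintype.one_lt_card_iff.mpr ⟨s, f, hsf⟩
  have hbad : Fintype.card {S : Finset σ // f ∈ S ∧ s ∉ S} = 2 ^ (Fintype.card σ - 2) := by
    rw [Fintype.card_subtype]
    have : Finset.univ.filter (fun S : Finset σ => f ∈ S ∧ s ∉ S) =
        Finset.Icc {f} (Finset.univ.erase s) := by
      ext S
      simp [Finset.subset_iff, and_comm]
    rw [this, Finset.card_Icc_finset (by simpa using hsf.symm)]
    simp [Finset.card_erase_of_mem, Nat.sub_sub]
  have hcompl := Fintype.card_subtype_compl (fun S : Finset σ => f ∈ S ∧ s ∉ S)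
  simp only [not_and, not_not, Fintype.card_finset, hbad] at hcompl
  rw [hcompl]
  obtain ⟨k, hk⟩ := Nat.exists_eq_add_of_le' hm
  rw [hk, Nat.add_sub_cancel, pow_add]
  omega

theorem Fintype.card_finset_card_le_one :
    Fintype.card {S : Finset σ // S.card ≤ 1} ≤ Fintype.card σ + 1 := by
  rw [← Fintype.card_option]
  refine Fintype.card_le_of_surjective (fun o => ⟨o.toFinset, Option.card_toFinset o ▸ ?_⟩) ?_
  · cases o <;> simp
  · rintro ⟨S, hS⟩
    rcases Nat.le_one_iff_eq_zero_or_eq_one.mp hS with h | h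
    · exact ⟨none, Subtype.ext (Finset.card_eq_zero.mp h).symm⟩
    · obtain ⟨x, rfl⟩ := Finset.card_eq_one.mp h
      exact ⟨some x, rfl⟩

end count

theorem sc_le_card {α σ : Type} [Fintype σ] (M : DFA α σ) : sc M.accepts ≤ Fintype.card σ :=
  Nat.sInf_le ⟨M.reindex (Fintype.equivFin σ), M.accepts_reindex _⟩

theorem sc_le_card_of_invariant {α σ : Type} (M : DFA α σ) (P : σ → Prop) [Fintype {s // P s}]
    (h₀ : P M.start) (h : ∀ s a, P s → P (M.step s a)) :
    sc M.accepts ≤ Fintype.card {s // P s} :=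
  M.accepts_restrict P h₀ h ▸ sc_le_card _

theorem sc_kstar_le {α σ : Type} [Fintype σ] (M : DFA α σ) :
    sc M.accepts∗ ≤ 3 * 2 ^ (Fintype.card σ - 2) := by
  classical
  rw [← M.accepts_kstar]
  by_cases hF : ∃ f ∈ M.accept, f ≠ M.start
  · obtain ⟨f, hf, hfs⟩ := hF
    calc sc M.kstar.accepts ≤ Fintype.card {S : Finset σ // f ∈ S → M.start ∈ S} :=
          sc_le_card_of_invariant _ _ (by simp [DFA.kstar])
            fun S a _ hS => M.start_mem_kstarStep hS hf
      _ = 3 * 2 ^ (Fintype.card σ - 2) := Fintype.card_finset_mem_imp_mem hfs.symm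
  · push Not at hF
    have hnum : Fintype.card σ + 1 ≤ 3 * 2 ^ (Fintype.card σ - 2) := by
      rcases Nat.lt_or_ge (Fintype.card σ) 2 with hm | hm
      · rw [Nat.sub_eq_zero_of_le hm.le]
        omega
      · obtain ⟨k, hk⟩ := Nat.exists_eq_add_of_le' hm
        have := Nat.lt_two_pow_self (n := k)
        rw [hk, Nat.add_sub_cancel]
        omega
    calc sc M.kstar.accepts ≤ Fintype.card {S : Finset σ // S.card ≤ 1} :=
          sc_le_card_of_invariant _ _ (by simp [DFA.kstar])
            fun S a hS => M.card_kstarStep_le_one hF (by split_ifs <;> simp [hS]) a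
      _ ≤ Fintype.card σ + 1 := Fintype.card_finset_card_le_one
      _ ≤ 3 * 2 ^ (Fintype.card σ - 2) := hnum

theorem stmt1_general (n1 n2 : ℕ)
    (Γ : Type) (L1 L2 : Language Γ)
    (hreg1 : ∃ m, recognizedBy L1 m) (hreg2 : ∃ m, recognizedBy L2 m)
    (hsc1 : sc L1 ≤ n1) (hsc2 : sc L2 ≤ n2) :
    sc ((L1 ⊓ L2)∗) ≤ 3 * 2 ^ (n1 * n2 - 2) := by
  obtain ⟨M1, hM1⟩ : recognizedBy L1 (sc L1) := Nat.sInf_mem hreg1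
  obtain ⟨M2, hM2⟩ : recognizedBy L2 (sc L2) := Nat.sInf_mem hreg2
  calc sc ((L1 ⊓ L2)∗) = sc (M1.inter M2).accepts∗ := by rw [DFA.accepts_inter, hM1, hM2]
    _ ≤ 3 * 2 ^ (sc L1 * sc L2 - 2) := by simpa using sc_kstar_le (M1.inter M2)
    _ ≤ 3 * 2 ^ (n1 * n2 - 2) := by gcongr; omega

/-- for regular languages `L1, L2` over a common finite alphabet with
`sc L1 ≤ n1` and `sc L2 ≤ n2` (where `n1, n2 ≥ 2`), the state complexity of the
Kleene star of their intersection is at most `3 · 2 ^ (n1·n2 - 2)`. -/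
theorem stmt1 (n1 n2 : ℕ) (h1 : 2 ≤ n1) (h2 : 2 ≤ n2)
    (Γ : Type) [Fintype Γ] (L1 L2 : Language Γ)
    (hreg1 : ∃ m, recognizedBy L1 m) (hreg2 : ∃ m, recognizedBy L2 m)
    (hsc1 : sc L1 ≤ n1) (hsc2 : sc L2 ≤ n2) :
    sc ((L1 ⊓ L2)∗) ≤ 3 * 2 ^ (n1 * n2 - 2) :=
  stmt1_general n1 n2 Γ L1 L2 hreg1 hreg2 hsc1 hsc2
end

section
/- Let n1, n2 ≥ 2 be integers and consider the DFA M̂ defined as follows: the alphabet is Σ = (Fin n1 → Fin n1) × (Fin n2 → Fin n2); the states are the subsets of Fin n1 × Fin n2; the initial state is ∅; a state T is final iff T = ∅ or (n1−1, n2−1) ∈ T; the transition on a state E by a letter (f,g) is cl(E′), where E′ = {(f(0), g(0))} if E = ∅ and E′ = {(f(i), g(j)) | (i,j) ∈ E} otherwise, and cl(S) = S ∪ {(0,0)} if (n1−1, n2−1) ∈ S and cl(S) = S otherwise. Then every subset T of Fin n1 × Fin n2 satisfying ((n1−1, n2−1) ∈ T implies (0,0) ∈ T) is reachable in M̂, i.e.,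 there is a word w over Σ such that reading w from the initial state ∅ leads to the state T. -/
/-! Induction on the size of the target state `T`. If the corner `(n1-1, n2-1)` lies in `T`,
so does the origin `(0,0)`, and `T` is reached in one step from the smaller corner-free state
obtained by deleting the origin and swapping `0 ↔ n-1` in both coordinates: the letter made
of the two swaps maps it back onto `T \ {(0,0)}`, which contains the corner, and the closure
re-inserts the origin. If the corner is not in `T` and `|T| ≥ 2`, then `T` is the injective
image, under some letter `(f, g)`, of a state of the same size containing both the origin and
the corner, which is reachable by the first case. Such a preimage comes from permutations of
the two coordinates when two points of `T` differ in both coordinates; otherwise `T` lies in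
a single row or column, and the letter is constant in that coordinate. -/

attribute [local instance] Classical.propDecidable

/-- The transition function of the DFA `M̂`: on a state `E ⊆ Fin n1 × Fin n2` and a
letter `(f, g)`, first form `E' = {(f 0, g 0)}` if `E = ∅` and
`E' = {(f i, g j) | (i,j) ∈ E}` otherwise, then add `(0,0)` to `E'` whenever
`(n1-1, n2-1) ∈ E'`. -/
noncomputable def starInterStep (n1 n2 : ℕ) (h1 : 0 < n1) (h2 : 0 < n2)
    (E : Set (Fin n1 × Fin n2)) (a : (Fin n1 → Fin n1) × (Fin n2 → Fin n2)) :
    Set (Fin n1 × Fin n2) :=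
  let E' : Set (Fin n1 × Fin n2) :=
    if E = ∅ then {(a.1 ⟨0, h1⟩, a.2 ⟨0, h2⟩)}
    else (fun p : Fin n1 × Fin n2 => (a.1 p.1, a.2 p.2)) '' E
  if ((⟨n1 - 1, Nat.sub_lt h1 Nat.one_pos⟩ : Fin n1),
      (⟨n2 - 1, Nat.sub_lt h2 Nat.one_pos⟩ : Fin n2)) ∈ E' then
    insert ((⟨0, h1⟩ : Fin n1), (⟨0, h2⟩ : Fin n2)) E'
  else E'

open Set

section MarkedPreimage

variable {α β : Type*}

theorem Equiv.Perm.exists_apply_eq_and_apply_eq {a b u v : α} (hab : a ≠ b) (huv : u ≠ v) :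
    ∃ σ : Equiv.Perm α, σ a = u ∧ σ b = v := by
  obtain ⟨σ, hσ⟩ := Equiv.Perm.exists_extending_pair ![a, b] ![u, v]
    (injective_pair_iff_ne.2 hab) (injective_pair_iff_ne.2 huv)
  exact ⟨σ, hσ 0, hσ 1⟩

def HasMarkedPreimage (p q : α × β) (T : Set (α × β)) : Prop :=
  ∃ (S : Set (α × β)) (f : α → α) (g : β → β),
    p ∈ S ∧ q ∈ S ∧ S.ncard = T.ncard ∧ Prod.map f g '' S = T

theorem HasMarkedPreimage.of_leftInvOn {p q : α × β} {T : Set (α × β)} {φ : α × β → α × β}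
    {f : α → α} {g : β → β} (h : LeftInvOn (Prod.map f g) φ T) (hp : p ∈ φ '' T)
    (hq : q ∈ φ '' T) : HasMarkedPreimage p q T :=
  ⟨φ '' T, f, g, hp, hq, h.injOn.ncard_image, h.image_image⟩

variable {p q : α × β} {T : Set (α × β)} {t₁ t₂ : α × β}

theorem hasMarkedPreimage_of_ne_of_ne (hpq₁ : p.1 ≠ q.1) (hpq₂ : p.2 ≠ q.2) (ht₁ : t₁ ∈ T)
    (ht₂ : t₂ ∈ T) (h₁ : t₁.1 ≠ t₂.1) (h₂ : t₁.2 ≠ t₂.2) : HasMarkedPreimage p q T := by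
  obtain ⟨σ, hσ₁, hσ₂⟩ := Equiv.Perm.exists_apply_eq_and_apply_eq h₁ hpq₁
  obtain ⟨τ, hτ₁, hτ₂⟩ := Equiv.Perm.exists_apply_eq_and_apply_eq h₂ hpq₂
  exact .of_leftInvOn (φ := Prod.map σ τ) (f := σ.symm) (g := τ.symm)
    (fun t _ => Prod.ext (σ.symm_apply_apply _) (τ.symm_apply_apply _))
    ⟨t₁, ht₁, Prod.ext hσ₁ hτ₁⟩ ⟨t₂, ht₂, Prod.ext hσ₂ hτ₂⟩

theorem hasMarkedPreimage_of_fst_eq (hpq₂ : p.2 ≠ q.2) {r : α} (hr : ∀ t ∈ T, t.1 = r)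
    (ht₁ : t₁ ∈ T) (ht₂ : t₂ ∈ T) (h₂ : t₁.2 ≠ t₂.2) : HasMarkedPreimage p q T := by
  obtain ⟨τ, hτ₁, hτ₂⟩ := Equiv.Perm.exists_apply_eq_and_apply_eq h₂ hpq₂
  have hne : t₂ ≠ t₁ := fun h => h₂ (h ▸ rfl)
  refine .of_leftInvOn (φ := fun t => (if t = t₁ then p.1 else q.1, τ t.2))
    (f := fun _ => r) (g := τ.symm) (fun t ht => ?_) ⟨t₁, ht₁, ?_⟩ ⟨t₂, ht₂, ?_⟩
  · exact Prod.ext (hr t ht).symm (τ.symm_apply_apply _)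
  · simp [hτ₁]
  · simp [hτ₂, hne]

theorem hasMarkedPreimage_of_snd_eq (hpq₁ : p.1 ≠ q.1) {c : β} (hc : ∀ t ∈ T, t.2 = c)
    (ht₁ : t₁ ∈ T) (ht₂ : t₂ ∈ T) (h₁ : t₁.1 ≠ t₂.1) : HasMarkedPreimage p q T := by
  obtain ⟨σ, hσ₁, hσ₂⟩ := Equiv.Perm.exists_apply_eq_and_apply_eq h₁ hpq₁
  have hne : t₂ ≠ t₁ := fun h => h₁ (h ▸ rfl)
  refine .of_leftInvOn (φ := fun t => (σ t.1, if t = t₁ then p.2 else q.2))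
    (f := σ.symm) (g := fun _ => c) (fun t ht => ?_) ⟨t₁, ht₁, ?_⟩ ⟨t₂, ht₂, ?_⟩
  · exact Prod.ext (σ.symm_apply_apply _) (hc t ht).symm
  · simp [hσ₁]
  · simp [hσ₂, hne]

theorem Set.Nontrivial.hasMarkedPreimage (hpq₁ : p.1 ≠ q.1) (hpq₂ : p.2 ≠ q.2)
    (hT : T.Nontrivial) : HasMarkedPreimage p q T := by
  by_cases hgen : ∃ t₁ ∈ T, ∃ t₂ ∈ T, t₁.1 ≠ t₂.1 ∧ t₁.2 ≠ t₂.2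
  · obtain ⟨t₁, ht₁, t₂, ht₂, h₁, h₂⟩ := hgen
    exact hasMarkedPreimage_of_ne_of_ne hpq₁ hpq₂ ht₁ ht₂ h₁ h₂
  push Not at hgen
  obtain ⟨t₁, ht₁, t₂, ht₂, hne⟩ := hT
  by_cases h₁ : t₁.1 = t₂.1
  · have h₂ : t₁.2 ≠ t₂.2 := fun h₂ => hne (Prod.ext h₁ h₂)
    refine hasMarkedPreimage_of_fst_eq hpq₂ (r := t₁.1) (fun t ht => ?_) ht₁ ht₂ h₂
    by_contra h
    exact h₂ ((hgen t ht t₁ ht₁ h).symm.trans (hgen t ht t₂ ht₂ (h₁ ▸ h)))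
  · have h₂ : t₁.2 = t₂.2 := hgen t₁ ht₁ t₂ ht₂ h₁
    refine hasMarkedPreimage_of_snd_eq hpq₁ (c := t₁.2) (fun t ht => ?_) ht₁ ht₂ h₁
    by_contra h
    have e₁ : t.1 = t₁.1 := by_contra fun h' => h (hgen t ht t₁ ht₁ h')
    have e₂ : t.1 = t₂.1 := by_contra fun h' => h ((hgen t ht t₂ ht₂ h').trans h₂.symm)
    exact h₁ (e₁.symm.trans e₂)

end MarkedPreimage

theorem Fin.mk_zero_ne_mk_sub_one {n : ℕ} (h : 0 < n) (hn : 2 ≤ n) :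
    (⟨0, h⟩ : Fin n) ≠ ⟨n - 1, Nat.sub_lt h Nat.one_pos⟩ := by
  simp only [ne_eq, Fin.mk.injEq]
  omega

namespace StarInter

variable {n1 n2 : ℕ} (h1 : 0 < n1) (h2 : 0 < n2)

def origin : Fin n1 × Fin n2 := (⟨0, h1⟩, ⟨0, h2⟩)

def corner : Fin n1 × Fin n2 :=
  (⟨n1 - 1, Nat.sub_lt h1 Nat.one_pos⟩, ⟨n2 - 1, Nat.sub_lt h2 Nat.one_pos⟩)

def Reachable (T : Set (Fin n1 × Fin n2)) : Prop :=
  ∃ w : List ((Fin n1 → Fin n1) × (Fin n2 → Fin n2)), w.foldl (starInterStep n1 n2 h1 h2) ∅ = T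

variable {h1 h2}

theorem origin_ne_corner (hn1 : 2 ≤ n1) : origin h1 h2 ≠ corner h1 h2 :=
  fun h => Fin.mk_zero_ne_mk_sub_one h1 hn1 (congrArg Prod.fst h)

theorem starInterStep_of_nonempty {E : Set (Fin n1 × Fin n2)} (hE : E.Nonempty)
    (f : Fin n1 → Fin n1) (g : Fin n2 → Fin n2) :
    starInterStep n1 n2 h1 h2 E (f, g) =
      if corner h1 h2 ∈ Prod.map f g '' E then insert (origin h1 h2) (Prod.map f g '' E)
      else Prod.map f g '' E := by
  simp only [starInterStep, if_neg hE.ne_empty]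
  rfl

theorem Reachable.starInterStep {S : Set (Fin n1 × Fin n2)} (hS : Reachable h1 h2 S)
    (a : (Fin n1 → Fin n1) × (Fin n2 → Fin n2)) :
    Reachable h1 h2 (starInterStep n1 n2 h1 h2 S a) := by
  obtain ⟨w, rfl⟩ := hS
  exact ⟨w ++ [a], List.foldl_concat ..⟩

theorem Reachable.image {S : Set (Fin n1 × Fin n2)} (hS : Reachable h1 h2 S)
    (hne : S.Nonempty) {f : Fin n1 → Fin n1} {g : Fin n2 → Fin n2}
    (hc : corner h1 h2 ∉ Prod.map f g '' S) : Reachable h1 h2 (Prod.map f g '' S) := by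
  simpa [starInterStep_of_nonempty hne, hc] using hS.starInterStep (f, g)

theorem reachable_singleton {p : Fin n1 × Fin n2} (hp : p ≠ corner h1 h2) :
    Reachable h1 h2 {p} := by
  refine ⟨[(fun _ => p.1, fun _ => p.2)], ?_⟩
  simp only [List.foldl, starInterStep, ↓reduceIte, Prod.mk.eta]
  exact if_neg hp.symm

def swapEnds {n : ℕ} (h : 0 < n) : Equiv.Perm (Fin n) :=
  Equiv.swap ⟨0, h⟩ ⟨n - 1, Nat.sub_lt h Nat.one_pos⟩

theorem prodCongr_swapEnds_corner :
    (swapEnds h1).prodCongr (swapEnds h2) (corner h1 h2) = origin h1 h2 := by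
  simp [swapEnds, origin, corner]

theorem reachable_of_corner_mem (hne : origin h1 h2 ≠ corner h1 h2) {T : Set (Fin n1 × Fin n2)}
    (hc : corner h1 h2 ∈ T) (ho : origin h1 h2 ∈ T)
    (ih : ∀ S : Set (Fin n1 × Fin n2), S.ncard < T.ncard → corner h1 h2 ∉ S → Reachable h1 h2 S) :
    Reachable h1 h2 T := by
  set e := (swapEnds h1).prodCongr (swapEnds h2)
  set X := T \ {origin h1 h2}
  have hcX : corner h1 h2 ∈ X := ⟨hc, hne.symm⟩
  have hS : Reachable h1 h2 (e ⁻¹' X) := by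
    refine ih _ ?_ ?_
    · rw [ncard_preimage_of_injective_subset_range e.injective (by simp)]
      exact ncard_sdiff_singleton_lt_of_mem ho
    · rw [mem_preimage, prodCongr_swapEnds_corner]
      exact fun h => h.2 rfl
  have hX : Prod.map (swapEnds h1) (swapEnds h2) '' (e ⁻¹' X) = X := e.image_preimage X
  have hstep := hS.starInterStep (swapEnds h1, swapEnds h2)
  have hSne : (e ⁻¹' X).Nonempty := ⟨e.symm (corner h1 h2), by simpa using hcX⟩
  rwa [starInterStep_of_nonempty hSne, hX, if_pos hcX,
    insert_sdiff_singleton, insert_eq_of_mem ho] at hstep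

theorem reachable_of_corner_notMem (hn1 : 2 ≤ n1) (hn2 : 2 ≤ n2) (T : Set (Fin n1 × Fin n2))
    (hc : corner h1 h2 ∉ T) : Reachable h1 h2 T := by
  obtain rfl | hT := T.eq_empty_or_nonempty
  · exact ⟨[], rfl⟩
  obtain ⟨p, rfl⟩ | hT := hT.exists_eq_singleton_or_nontrivial
  · exact reachable_singleton (Ne.symm hc)
  obtain ⟨S, f, g, hoS, hcS, hcard, rfl⟩ :=
    hT.hasMarkedPreimage (p := origin h1 h2) (q := corner h1 h2)
      (Fin.mk_zero_ne_mk_sub_one h1 hn1) (Fin.mk_zero_ne_mk_sub_one h2 hn2)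
  refine Reachable.image ?_ ⟨_, hoS⟩ hc
  refine reachable_of_corner_mem (origin_ne_corner hn1) hcS hoS fun S' hlt hS' => ?_
  exact reachable_of_corner_notMem hn1 hn2 S' hS'
termination_by T.ncard
decreasing_by omega

theorem reachable (hn1 : 2 ≤ n1) (hn2 : 2 ≤ n2) {T : Set (Fin n1 × Fin n2)}
    (hT : corner h1 h2 ∈ T → origin h1 h2 ∈ T) : Reachable h1 h2 T := by
  by_cases hc : corner h1 h2 ∈ T
  · exact reachable_of_corner_mem (origin_ne_corner hn1) hc (hT hc) fun S _ =>
      reachable_of_corner_notMem hn1 hn2 S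
  · exact reachable_of_corner_notMem hn1 hn2 T hc

end StarInter

/-- every state `T` with `(n1-1, n2-1) ∈ T → (0,0) ∈ T` is reachable
from the initial state `∅` of the DFA `M̂`. -/
theorem stmt2 (n1 n2 : ℕ) (h1 : 2 ≤ n1) (h2 : 2 ≤ n2)
    (T : Set (Fin n1 × Fin n2))
    (hT : (((⟨n1 - 1, by omega⟩ : Fin n1), (⟨n2 - 1, by omega⟩ : Fin n2)) ∈ T) →
      (((⟨0, by omega⟩ : Fin n1), (⟨0, by omega⟩ : Fin n2)) ∈ T)) :
    ∃ w : List ((Fin n1 → Fin n1) × (Fin n2 → Fin n2)),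
      w.foldl (starInterStep n1 n2 (by omega) (by omega)) ∅ = T :=
  StarInter.reachable h1 h2 hT
end

section
/- For all integers n1, n2 ≥ 2, there exist a finite alphabet Σ and regular languages L1, L2 over Σ with sc(L1) = n1 and sc(L2) = n2 such that sc((L1 ∩ L2)*) = 3·2^(n1·n2−2). Together with the upper bound, the state complexity of the combined operation (L1, L2) ↦ (L1 ∩ L2)* equals 3·2^(n1·n2−2). -/
open Computability

namespace SCAux

variable {α σ τ : Type}

/-- Transport a DFA along an equivalence of state types. -/
def reindex (M : DFA α σ) (e : σ ≃ τ) : DFA α τ where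
  step t a := e (M.step (e.symm t) a)
  start := e M.start
  accept := {t | e.symm t ∈ M.accept}

lemma reindex_evalFrom (M : DFA α σ) (e : σ ≃ τ) (s : σ) (w : List α) :
    (reindex M e).evalFrom (e s) w = e (M.evalFrom s w) := by
  induction w generalizing s with
  | nil => rfl
  | cons a w ih =>
    show (reindex M e).evalFrom ((reindex M e).step (e s) a) w = e (M.evalFrom (M.step s a) w)
    have : (reindex M e).step (e s) a = e (M.step s a) := by simp [reindex]
    rw [this, ih]

lemma reindex_accepts (M : DFA α σ) (e : σ ≃ τ) :
    (reindex M e).accepts = M.accepts := by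
  ext w
  rw [DFA.mem_accepts, DFA.mem_accepts]
  show (reindex M e).evalFrom (e M.start) w ∈ _ ↔ M.evalFrom M.start w ∈ _
  rw [reindex_evalFrom]
  simp [reindex]

lemma recognizedBy_card (M : DFA α σ) [Fintype σ] :
    recognizedBy M.accepts (Fintype.card σ) :=
  ⟨reindex M (Fintype.equivFin σ), reindex_accepts _ _⟩

lemma sc_le_card (M : DFA α σ) [Fintype σ] : sc M.accepts ≤ Fintype.card σ :=
  Nat.sInf_le (recognizedBy_card M)

lemma sc_recognizes {L : Language α} (h : ∃ m, recognizedBy L m) :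
    recognizedBy L (sc L) :=
  Nat.sInf_mem h

lemma card_le_sc (M : DFA α σ) [Fintype σ]
    (reach : ∀ s : σ, ∃ w, M.eval w = s)
    (disc : ∀ s t : σ, s ≠ t →
      ∃ z, ¬(M.evalFrom s z ∈ M.accept ↔ M.evalFrom t z ∈ M.accept)) :
    Fintype.card σ ≤ sc M.accepts := by
  obtain ⟨D, hD⟩ := sc_recognizes (L := M.accepts) ⟨_, recognizedBy_card M⟩
  choose wv hw using reach
  have hinj : Function.Injective (fun s => D.eval (wv s)) := by
    intro s t hst
    by_contra hne
    obtain ⟨z, hz⟩ := disc s t hne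
    apply hz
    have key : ∀ u : σ, ∀ zz, (M.evalFrom u zz ∈ M.accept ↔ D.evalFrom (D.eval (wv u)) zz ∈ D.accept) := by
      intro u zz
      have h1 : M.eval (wv u ++ zz) = M.evalFrom u zz := by
        rw [DFA.eval, DFA.evalFrom_of_append,
          show M.evalFrom M.start (wv u) = u from hw u]
      have h2 : D.eval (wv u ++ zz) = D.evalFrom (D.eval (wv u)) zz := by
        rw [DFA.eval, DFA.evalFrom_of_append]
      have h3 : (wv u ++ zz ∈ M.accepts) ↔ (wv u ++ zz ∈ D.accepts) := by rw [hD]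
      rw [DFA.mem_accepts, DFA.mem_accepts, h1, h2] at h3
      exact h3
    rw [key s z, key t z, show D.eval (wv s) = D.eval (wv t) from hst]
  have := Fintype.card_le_of_injective _ hinj
  simpa using this

lemma sc_eq_card (M : DFA α σ) [Fintype σ]
    (reach : ∀ s : σ, ∃ w, M.eval w = s)
    (disc : ∀ s t : σ, s ≠ t →
      ∃ z, ¬(M.evalFrom s z ∈ M.accept ↔ M.evalFrom t z ∈ M.accept)) :
    sc M.accepts = Fintype.card σ :=
  le_antisymm (sc_le_card M) (card_le_sc M reach disc)

/-! ### kstar helpers -/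

lemma append_mem_kstar {L : Language α} {u v : List α} (hu : u ∈ L∗) (hv : v ∈ L) :
    u ++ v ∈ L∗ := by
  obtain ⟨S, rfl, hS⟩ := hu
  refine ⟨S ++ [v], by simp, ?_⟩
  intro y hy
  rcases List.mem_append.1 hy with h | h
  · exact hS y h
  · simpa using (by simpa using h : y = v) ▸ hv

lemma mem_kstar_self {L : Language α} {v : List α} (hv : v ∈ L) : v ∈ L∗ := by
  refine ⟨[v], by simp, ?_⟩
  intro y hy
  simpa using (by simpa using hy : y = v) ▸ hv

lemma kstar_split {L : Language α} {w : List α} (hw : w ∈ L∗) (hne : w ≠ []) :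
    ∃ u v, w = u ++ v ∧ u ∈ L∗ ∧ v ∈ L ∧ v ≠ [] := by
  rw [Language.mem_kstar_iff_exists_nonempty] at hw
  obtain ⟨S, rfl, hS⟩ := hw
  induction S using List.reverseRecOn with
  | nil => simp at hne
  | append_singleton S' v _ =>
    refine ⟨S'.flatten, v, by simp, ?_, (hS v (by simp)).1, (hS v (by simp)).2⟩
    exact Language.join_mem_kstar fun y hy => (hS y (by simp [hy])).1

lemma kstar_eq_self {L : Language α} (h0 : [] ∈ L)
    (hmul : ∀ u v, u ∈ L → v ∈ L → u ++ v ∈ L) : L∗ = L := by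
  ext w
  constructor
  · rintro ⟨S, rfl, hS⟩
    induction S with
    | nil => simpa using h0
    | cons y S ih =>
      rw [List.flatten_cons]
      exact hmul _ _ (hS y (by simp)) (ih fun z hz => hS z (by simp [hz]))
  · exact mem_kstar_self

/-! ### product DFA -/

def prodDFA (M : DFA α σ) (N : DFA α τ) : DFA α (σ × τ) where
  step p a := (M.step p.1 a, N.step p.2 a)
  start := (M.start, N.start)
  accept := {p | p.1 ∈ M.accept ∧ p.2 ∈ N.accept}

lemma prodDFA_evalFrom (M : DFA α σ) (N : DFA α τ) (s : σ) (t : τ) (w : List α) :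
    (prodDFA M N).evalFrom (s, t) w = (M.evalFrom s w, N.evalFrom t w) := by
  induction w generalizing s t with
  | nil => rfl
  | cons a w ih =>
    show (prodDFA M N).evalFrom ((prodDFA M N).step (s, t) a) w = _
    rw [show (prodDFA M N).step (s, t) a = (M.step s a, N.step t a) from rfl, ih]
    rfl

lemma prodDFA_accepts (M : DFA α σ) (N : DFA α τ) :
    (prodDFA M N).accepts = M.accepts ⊓ N.accepts := by
  ext w
  rw [DFA.mem_accepts]
  show (prodDFA M N).evalFrom (M.start, N.start) w ∈ _ ↔ _
  rw [prodDFA_evalFrom]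
  exact Iff.rfl

end SCAux
namespace SCAux

variable {α σ : Type} [DecidableEq σ]

def close (M : DFA α σ) (acc : Finset σ) (T : Finset σ) : Finset σ :=
  if (T ∩ acc).Nonempty then insert M.start T else T

def Inv (M : DFA α σ) (acc : Finset σ) (S : Finset σ) : Prop :=
  S.Nonempty ∧ ((S ∩ acc).Nonempty → M.start ∈ S)

instance decInv (M : DFA α σ) (acc : Finset σ) : DecidablePred (Inv M acc) := fun S => by
  unfold Inv; exact instDecidableAnd

lemma subset_close (M : DFA α σ) (acc T : Finset σ) : T ⊆ close M acc T := by
  unfold close; split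
  · exact Finset.subset_insert _ _
  · exact Finset.Subset.refl _

lemma inv_close (M : DFA α σ) (acc : Finset σ) {T : Finset σ} (h : T.Nonempty) :
    Inv M acc (close M acc T) := by
  unfold close
  split
  · exact ⟨Finset.insert_nonempty _ _, fun _ => Finset.mem_insert_self _ _⟩
  · next hn => exact ⟨h, fun hx => absurd hx hn⟩

lemma mem_close_iff (M : DFA α σ) (acc T : Finset σ) (q : σ) :
    q ∈ close M acc T ↔ q ∈ T ∨ ((T ∩ acc).Nonempty ∧ q = M.start) := by
  unfold close
  split
  · next h => simp [Finset.mem_insert, h]; tauto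
  · next h => simp [h]

def starDFA (M : DFA α σ) (acc : Finset σ) :
    DFA α (Option {S : Finset σ // Inv M acc S}) where
  step x a :=
    match x with
    | none => some ⟨close M acc {M.step M.start a},
        inv_close M acc (Finset.singleton_nonempty _)⟩
    | some S => some ⟨close M acc (S.1.image (fun q => M.step q a)),
        inv_close M acc (S.2.1.image _)⟩
  start := none
  accept := {x | ∀ S : {T : Finset σ // Inv M acc T}, x = some S → (S.1 ∩ acc).Nonempty}

lemma none_mem_accept (M : DFA α σ) (acc : Finset σ) :
    (none : Option {S : Finset σ // Inv M acc S}) ∈ (starDFA M acc).accept :=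
  fun _ h => nomatch h

lemma some_mem_accept (M : DFA α σ) (acc : Finset σ) (S : {T : Finset σ // Inv M acc T}) :
    some S ∈ (starDFA M acc).accept ↔ (S.1 ∩ acc).Nonempty := by
  constructor
  · intro h; exact h S rfl
  · intro h T hT
    obtain rfl : S = T := Option.some.inj hT
    exact h

lemma inter_acc_nonempty (M : DFA α σ) {acc : Finset σ} (hacc : ↑acc = M.accept)
    (T : Finset σ) : (T ∩ acc).Nonempty ↔ ∃ x ∈ T, x ∈ M.accept := by
  constructor
  · rintro ⟨x, hx⟩
    rw [Finset.mem_inter] at hx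
    exact ⟨x, hx.1, by rw [← hacc]; exact hx.2⟩
  · rintro ⟨x, hx1, hx2⟩
    exact ⟨x, Finset.mem_inter.2 ⟨hx1, by rw [← hacc] at hx2; exact hx2⟩⟩

/-- The key invariant characterizing states of the star DFA. -/
lemma star_eval (M : DFA α σ) {acc : Finset σ} (hacc : ↑acc = M.accept)
    (w : List α) (hw : w ≠ []) :
    ∃ (S : Finset σ) (h : Inv M acc S), (starDFA M acc).eval w = some ⟨S, h⟩ ∧
      ∀ q, q ∈ S ↔ ∃ u v, w = u ++ v ∧ u ∈ M.accepts∗ ∧ M.evalFrom M.start v = q := by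
  induction w using List.reverseRecOn with
  | nil => exact absurd rfl hw
  | append_singleton x a ih =>
    rcases eq_or_ne x [] with rfl | hx
    · -- base case : w = [a]
      refine ⟨close M acc {M.step M.start a}, inv_close M acc (Finset.singleton_nonempty _),
        ?_, ?_⟩
      · rfl
      · intro q
        rw [mem_close_iff, Finset.mem_singleton, inter_acc_nonempty M hacc]
        constructor
        · rintro (rfl | ⟨⟨x, hx1, hx2⟩, rfl⟩)
          · exact ⟨[], [a], rfl, Language.nil_mem_kstar _, rfl⟩
          · rw [Finset.mem_singleton] at hx1
            subst hx1
            have : [a] ∈ M.accepts := by rw [DFA.mem_accepts]; exact hx2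
            exact ⟨[a], [], by simp, mem_kstar_self this, rfl⟩
        · rintro ⟨u, v, huv, hu, rfl⟩
          rcases List.append_eq_cons_iff.1 huv.symm with ⟨rfl, rfl⟩ | ⟨u', rfl, hv⟩
          · left; rfl
          · have h0 : u' ++ v = [] := hv.symm
            have hu' : u' = [] := (List.append_eq_nil_iff.1 h0).1
            have hv' : v = [] := (List.append_eq_nil_iff.1 h0).2
            subst hu'; subst hv'
            right
            refine ⟨⟨M.step M.start a, Finset.mem_singleton_self _, ?_⟩, rfl⟩
            obtain ⟨u1, v1, he, _, hv1, hvne⟩ := kstar_split hu (by simp)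
            have : u1 = [] ∧ v1 = [a] := by
              rcases List.append_eq_cons_iff.1 he.symm with ⟨rfl, rfl⟩ | ⟨u', rfl, hv⟩
              · exact ⟨rfl, rfl⟩
              · exfalso
                have h0 : u' ++ v1 = [] := hv.symm
                exact hvne (List.append_eq_nil_iff.1 h0).2
            obtain ⟨rfl, rfl⟩ := this
            rw [DFA.mem_accepts] at hv1
            exact hv1
    · -- inductive step: w = x ++ [a], x ≠ []
      obtain ⟨S, hS, hev, hmem⟩ := ih hx
      refine ⟨close M acc (S.image (fun q => M.step q a)), inv_close M acc (hS.1.image _),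
        ?_, ?_⟩
      · rw [DFA.eval_append_singleton, hev]; rfl
      · intro q
        rw [mem_close_iff, Finset.mem_image, inter_acc_nonempty M hacc]
        constructor
        · rintro (⟨p, hp, rfl⟩ | ⟨⟨r, hr, hracc⟩, rfl⟩)
          · obtain ⟨u, v, rfl, hu, rfl⟩ := (hmem p).1 hp
            exact ⟨u, v ++ [a], by simp, hu, by rw [DFA.evalFrom_of_append]; rfl⟩
          · rw [Finset.mem_image] at hr
            obtain ⟨p, hp, rfl⟩ := hr
            obtain ⟨u, v, rfl, hu, rfl⟩ := (hmem p).1 hp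
            have hva : v ++ [a] ∈ M.accepts := by
              rw [DFA.mem_accepts, DFA.eval_append_singleton]
              exact hracc
            exact ⟨u ++ (v ++ [a]), [], by simp, append_mem_kstar hu hva, rfl⟩
        · rintro ⟨u, v, huv, hu, rfl⟩
          rcases v.eq_nil_or_concat with rfl | ⟨v', b, rfl⟩
          · -- v = [], q = start, u = x ++ [a] ∈ L*
            rw [List.append_nil] at huv
            subst huv
            obtain ⟨u1, v1, he, hu1, hv1, hvne⟩ := kstar_split hu (by simp)
            rcases v1.eq_nil_or_concat with rfl | ⟨v2, b, rfl⟩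
            · exact absurd rfl hvne
            · rw [List.concat_eq_append] at he hv1
              rw [← List.append_assoc] at he
              obtain ⟨h3, h4⟩ := List.append_inj' he (by simp)
              have hb : b = a := by simpa using h4.symm
              subst hb
              right
              refine ⟨⟨M.step (M.evalFrom M.start v2) b, ?_, ?_⟩, rfl⟩
              · rw [Finset.mem_image]
                exact ⟨M.evalFrom M.start v2, (hmem _).2 ⟨u1, v2, h3, hu1, rfl⟩, rfl⟩
              · rw [DFA.mem_accepts, DFA.eval, DFA.evalFrom_of_append] at hv1
                exact hv1
          · -- v = v' ++ [b]
            rw [List.concat_eq_append] at huv ⊢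
            rw [← List.append_assoc] at huv
            obtain ⟨h3, h4⟩ := List.append_inj' huv (by simp)
            have hb : b = a := (by simpa using h4 : a = b).symm
            subst hb
            left
            refine ⟨M.evalFrom M.start v', (hmem _).2 ⟨u, v', h3, hu, rfl⟩, ?_⟩
            rw [DFA.evalFrom_append_singleton]

theorem starDFA_accepts (M : DFA α σ) {acc : Finset σ} (hacc : ↑acc = M.accept) :
    (starDFA M acc).accepts = M.accepts∗ := by
  ext w
  rcases eq_or_ne w [] with rfl | hw
  · simp only [DFA.mem_accepts]
    constructor
    · intro _; exact Language.nil_mem_kstar _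
    · intro _; exact none_mem_accept M acc
  · obtain ⟨S, hS, hev, hmem⟩ := star_eval M hacc w hw
    rw [DFA.mem_accepts, hev, some_mem_accept, inter_acc_nonempty M hacc]
    constructor
    · rintro ⟨q, hq, hqacc⟩
      obtain ⟨u, v, rfl, hu, rfl⟩ := (hmem q).1 hq
      exact append_mem_kstar hu (by rw [DFA.mem_accepts]; exact hqacc)
    · intro hwk
      obtain ⟨u, v, rfl, hu, hv, hvne⟩ := kstar_split hwk hw
      refine ⟨M.evalFrom M.start v, (hmem _).2 ⟨u, v, rfl, hu, rfl⟩, ?_⟩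
      rw [DFA.mem_accepts] at hv
      exact hv

end SCAux
namespace SCAux

variable {α σ : Type} [DecidableEq σ]

lemma card_fs [Fintype σ] (q0 f0 : σ) (hne : f0 ≠ q0) :
    Fintype.card {S : Finset σ // f0 ∈ S ∧ q0 ∉ S} = 2 ^ (Fintype.card σ - 2) := by
  classical
  have e : {S : Finset σ // f0 ∈ S ∧ q0 ∉ S} ≃ Finset {x : σ // x ≠ f0 ∧ x ≠ q0} :=
    { toFun := fun S => S.1.subtype _
      invFun := fun T => ⟨insert f0 (T.map (Function.Embedding.subtype _)),
        Finset.mem_insert_self _ _, by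
          intro hq0
          simp only [Finset.mem_insert, Finset.mem_map, Function.Embedding.coe_subtype] at hq0
          rcases hq0 with h | ⟨⟨x, hx⟩, _, h⟩
          · exact hne h.symm
          · exact hx.2 h⟩
      left_inv := by
        rintro ⟨S, hf, hq⟩
        apply Subtype.ext
        ext x
        simp only [Finset.mem_insert, Finset.mem_map, Finset.mem_subtype,
          Function.Embedding.coe_subtype]
        constructor
        · rintro (rfl | ⟨⟨y, hy⟩, hyS, rfl⟩)
          · exact hf
          · exact hyS
        · intro hx
          rcases eq_or_ne x f0 with rfl | hxf
          · exact Or.inl rfl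
          · rcases eq_or_ne x q0 with rfl | hxq
            · exact absurd hx hq
            · exact Or.inr ⟨⟨x, hxf, hxq⟩, hx, rfl⟩
      right_inv := by
        intro T
        ext ⟨x, hx1, hx2⟩
        simp only [Finset.mem_subtype, Finset.mem_insert, Finset.mem_map,
          Function.Embedding.coe_subtype]
        constructor
        · rintro (h | ⟨y, hy, h⟩)
          · exact absurd h hx1
          · rwa [show y = ⟨x, hx1, hx2⟩ from Subtype.ext h] at hy
        · intro h
          exact Or.inr ⟨⟨x, hx1, hx2⟩, h, rfl⟩ }
  rw [Fintype.card_congr e, Fintype.card_finset]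
  congr 1
  have h2 : Fintype.card {x : σ // x = f0 ∨ x = q0} = 2 := by
    rw [Fintype.card_subtype]
    have : Finset.univ.filter (fun x => x = f0 ∨ x = q0) = {f0, q0} := by
      ext x; simp [Finset.mem_insert]
    rw [this, Finset.card_pair hne]
  have e2 : {x : σ // x ≠ f0 ∧ x ≠ q0} ≃ {x : σ // ¬(x = f0 ∨ x = q0)} :=
    Equiv.subtypeEquivRight (fun x => (not_or).symm)
  rw [Fintype.card_congr e2, Fintype.card_subtype_compl, h2]

lemma not_inv_iff [Fintype σ] (M : DFA α σ) (acc : Finset σ) (f0 : σ) (hf0 : acc = {f0})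
    (S : Finset σ) :
    ¬ Inv M acc S ↔ (S = ∅ ∨ (f0 ∈ S ∧ M.start ∉ S)) := by
  subst hf0
  unfold Inv
  have h1 : (S ∩ {f0}).Nonempty ↔ f0 ∈ S := by
    constructor
    · rintro ⟨x, hx⟩
      rw [Finset.mem_inter, Finset.mem_singleton] at hx
      exact hx.2 ▸ hx.1
    · intro h; exact ⟨f0, Finset.mem_inter.2 ⟨h, Finset.mem_singleton_self _⟩⟩
  rw [h1, ← Finset.not_nonempty_iff_eq_empty]
  tauto

lemma card_disj [Fintype σ] (M : DFA α σ) (f0 : σ) (hne : f0 ≠ M.start) :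
    Fintype.card {S : Finset σ // S = ∅ ∨ (f0 ∈ S ∧ M.start ∉ S)} =
      1 + 2 ^ (Fintype.card σ - 2) := by
  classical
  rw [Fintype.card_subtype_or_disjoint]
  · rw [Fintype.card_subtype_eq, card_fs M.start f0 hne]
  · intro P hP hQ S hS
    have h1 := hP S hS
    have h2 := hQ S hS
    simp only at h1 h2
    subst h1
    simp at h2

lemma card_inv_eq [Fintype σ] (M : DFA α σ) (f0 : σ) (hne : f0 ≠ M.start)
    (hN : 2 ≤ Fintype.card σ) :
    Fintype.card (Option {S : Finset σ // Inv M ({f0} : Finset σ) S}) =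
      3 * 2 ^ (Fintype.card σ - 2) := by
  classical
  rw [Fintype.card_option]
  have hc := Fintype.card_subtype_compl (p := Inv M ({f0} : Finset σ))
  have he : Fintype.card {S : Finset σ // ¬ Inv M ({f0} : Finset σ) S} =
      1 + 2 ^ (Fintype.card σ - 2) := by
    rw [Fintype.card_congr (Equiv.subtypeEquivRight
      (fun S => not_inv_iff M _ f0 rfl S)), card_disj M f0 hne]
  have hle : Fintype.card {S : Finset σ // Inv M ({f0} : Finset σ) S} ≤
      Fintype.card (Finset σ) := Fintype.card_subtype_le _
  rw [Fintype.card_finset] at hc hle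
  have hpow : (2:ℕ) ^ Fintype.card σ = 4 * 2 ^ (Fintype.card σ - 2) := by
    obtain ⟨k, hk⟩ := Nat.exists_eq_add_of_le hN
    rw [hk, show 2 + k - 2 = k by omega, pow_add]
    ring
  have hd : 1 ≤ 2 ^ (Fintype.card σ - 2) := Nat.one_le_two_pow
  omega

lemma card_inv_le [Fintype σ] (M : DFA α σ) (acc : Finset σ) (f0 : σ)
    (hf0 : f0 ∈ acc) (hne : f0 ≠ M.start) (hN : 2 ≤ Fintype.card σ) :
    Fintype.card (Option {S : Finset σ // Inv M acc S}) ≤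
      3 * 2 ^ (Fintype.card σ - 2) := by
  classical
  rw [Fintype.card_option]
  have hc := Fintype.card_subtype_compl (p := Inv M acc)
  have hle : Fintype.card {S : Finset σ // Inv M acc S} ≤
      Fintype.card (Finset σ) := Fintype.card_subtype_le _
  have hmono : Fintype.card {S : Finset σ // S = ∅ ∨ (f0 ∈ S ∧ M.start ∉ S)} ≤
      Fintype.card {S : Finset σ // ¬ Inv M acc S} := by
    apply Fintype.card_subtype_mono
    rintro S (rfl | ⟨h1, h2⟩)
    · rintro ⟨⟨x, hx⟩, _⟩
      simp at hx
    · rintro ⟨_, himp⟩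
      exact h2 (himp ⟨f0, Finset.mem_inter.2 ⟨h1, hf0⟩⟩)
  rw [card_disj M f0 hne] at hmono
  rw [Fintype.card_finset] at hc hle
  have hpow : (2:ℕ) ^ Fintype.card σ = 4 * 2 ^ (Fintype.card σ - 2) := by
    obtain ⟨k, hk⟩ := Nat.exists_eq_add_of_le hN
    rw [hk, show 2 + k - 2 = k by omega, pow_add]
    ring
  have hd : 1 ≤ 2 ^ (Fintype.card σ - 2) := Nat.one_le_two_pow
  omega

end SCAux
namespace SCAux

variable {α σ : Type}

lemma le_3pow {n : ℕ} (hn : 2 ≤ n) : n ≤ 3 * 2 ^ (n - 2) := by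
  obtain ⟨k, rfl⟩ := Nat.exists_eq_add_of_le hn
  rw [show 2 + k - 2 = k by omega]
  induction k with
  | zero => norm_num
  | succ k ih =>
    have h1 : 1 ≤ 2 ^ k := Nat.one_le_two_pow
    have := ih (by omega)
    rw [pow_succ]
    omega

/-- A 2-state DFA for the language `{[]}`. -/
def nilDFA (α : Type) : DFA α (Fin 2) where
  step _ _ := 1
  start := 0
  accept := {0}

lemma nilDFA_evalFrom (w : List α) (s : Fin 2) (hw : w ≠ []) :
    (nilDFA α).evalFrom s w = 1 := by
  induction w generalizing s with
  | nil => exact absurd rfl hw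
  | cons a w ih =>
    show (nilDFA α).evalFrom 1 w = 1
    rcases eq_or_ne w [] with rfl | hw'
    · rfl
    · exact ih 1 hw'

lemma nilDFA_accepts : (nilDFA α).accepts = 1 := by
  ext w
  rw [DFA.mem_accepts, Language.mem_one]
  rcases eq_or_ne w [] with rfl | hw
  · simp [nilDFA, DFA.eval]
  · rw [DFA.eval, nilDFA_evalFrom w _ hw]
    simp [nilDFA]
    exact hw

theorem sc_kstar_le (M : DFA α σ) [Fintype σ] (hN : 2 ≤ Fintype.card σ) :
    sc (M.accepts∗) ≤ 3 * 2 ^ (Fintype.card σ - 2) := by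
  classical
  by_cases hF : ∃ f ∈ M.accept, f ≠ M.start
  · obtain ⟨f0, hf0, hne⟩ := hF
    set acc : Finset σ := M.accept.toFinset with haccdef
    have hacc : ↑acc = M.accept := Set.coe_toFinset _
    have h1 : sc ((starDFA M acc).accepts) ≤
        Fintype.card (Option {S : Finset σ // Inv M acc S}) := sc_le_card _
    rw [starDFA_accepts M hacc] at h1
    refine h1.trans (card_inv_le M acc f0 ?_ hne hN)
    rw [← Finset.mem_coe, hacc]
    exact hf0
  · push_neg at hF
    by_cases h0 : M.start ∈ M.accept
    · have hsub : ∀ u v, u ∈ M.accepts → v ∈ M.accepts → u ++ v ∈ M.accepts := by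
        intro u v hu hv
        rw [DFA.mem_accepts] at *
        rw [DFA.eval, DFA.evalFrom_of_append,
          show M.evalFrom M.start u = M.start from hF _ hu]
        exact hv
      have hnil : [] ∈ M.accepts := by rw [DFA.mem_accepts]; exact h0
      rw [kstar_eq_self hnil hsub]
      exact (sc_le_card M).trans (le_3pow hN)
    · have hempty : M.accepts = 0 := by
        ext w
        constructor
        · intro hw
          rw [DFA.mem_accepts] at hw
          exact absurd (hF _ hw ▸ hw) h0
        · intro hw; exact absurd hw (by simp)
      rw [hempty, kstar_zero, ← nilDFA_accepts (α := α)]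
      refine (sc_le_card _).trans ?_
      have : (3:ℕ) ≤ 3 * 2 ^ (Fintype.card σ - 2) :=
        Nat.le_mul_of_pos_right 3 (Nat.pos_of_ne_zero (by positivity))
      simp only [Fintype.card_fin]
      omega

end SCAux
namespace SCAux

section Witness

variable (a b : ℕ)

abbrev Γab := (Fin (a + 2) → Fin (a + 2)) × (Fin (b + 2) → Fin (b + 2))

def dfa1 : DFA (Γab a b) (Fin (a + 2)) where
  step q c := c.1 q
  start := 0
  accept := {Fin.last (a + 1)}

def dfa2 : DFA (Γab a b) (Fin (b + 2)) where
  step q c := c.2 q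
  start := 0
  accept := {Fin.last (b + 1)}

lemma last_ne_zero' (n : ℕ) : Fin.last (n + 1) ≠ (0 : Fin (n + 2)) := by
  simp [Fin.ext_iff]

lemma sc_dfa1 : sc (dfa1 a b).accepts = a + 2 := by
  have h := sc_eq_card (dfa1 a b) ?_ ?_
  · simpa using h
  · intro s
    exact ⟨[(fun _ => s, fun _ => 0)], rfl⟩
  · intro s t hne
    refine ⟨[(fun x => if x = s then Fin.last (a + 1) else 0, fun _ => 0)], ?_⟩
    have h1 : (dfa1 a b).evalFrom s [(fun x => if x = s then Fin.last (a + 1) else 0,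
        fun _ => (0 : Fin (b+2)))] = Fin.last (a + 1) := by
      show (if s = s then Fin.last (a + 1) else 0) = _
      simp
    have h2 : (dfa1 a b).evalFrom t [(fun x => if x = s then Fin.last (a + 1) else 0,
        fun _ => (0 : Fin (b+2)))] = 0 := by
      show (if t = s then Fin.last (a + 1) else 0) = _
      rw [if_neg (fun h => hne h.symm)]
    rw [h1, h2]
    simp only [dfa1, Set.mem_singleton_iff]
    intro h
    exact last_ne_zero' a (h.1 trivial).symm

lemma sc_dfa2 : sc (dfa2 a b).accepts = b + 2 := by
  have h := sc_eq_card (dfa2 a b) ?_ ?_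
  · simpa using h
  · intro s
    exact ⟨[(fun _ => 0, fun _ => s)], rfl⟩
  · intro s t hne
    refine ⟨[(fun _ => 0, fun x => if x = s then Fin.last (b + 1) else 0)], ?_⟩
    have h1 : (dfa2 a b).evalFrom s [(fun _ => (0 : Fin (a+2)),
        fun x => if x = s then Fin.last (b + 1) else 0)] = Fin.last (b + 1) := by
      show (if s = s then Fin.last (b + 1) else 0) = _
      simp
    have h2 : (dfa2 a b).evalFrom t [(fun _ => (0 : Fin (a+2)),
        fun x => if x = s then Fin.last (b + 1) else 0)] = 0 := by
      show (if t = s then Fin.last (b + 1) else 0) = _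
      rw [if_neg (fun h => hne h.symm)]
    rw [h1, h2]
    simp only [dfa2, Set.mem_singleton_iff]
    intro h
    exact last_ne_zero' b (h.1 trivial).symm

/-- The product automaton. -/
def PW : DFA (Γab a b) (Fin (a + 2) × Fin (b + 2)) := prodDFA (dfa1 a b) (dfa2 a b)

def q0W : Fin (a + 2) × Fin (b + 2) := (0, 0)

def fγW : Fin (a + 2) × Fin (b + 2) := (Fin.last (a + 1), Fin.last (b + 1))

def accW : Finset (Fin (a + 2) × Fin (b + 2)) := {fγW a b}

lemma fγW_ne_q0W : fγW a b ≠ q0W a b := by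
  simp only [fγW, q0W, Ne, Prod.mk.injEq, not_and]
  intro h
  exact absurd h (last_ne_zero' a)

lemma PW_start : (PW a b).start = q0W a b := rfl

lemma accW_coe : ↑(accW a b) = (PW a b).accept := by
  ext p
  simp only [accW, Finset.coe_singleton, Set.mem_singleton_iff, PW, prodDFA, dfa1, dfa2]
  show p = fγW a b ↔ p.1 ∈ ({Fin.last (a+1)} : Set _) ∧ p.2 ∈ ({Fin.last (b+1)} : Set _)
  simp [fγW, Prod.ext_iff]

lemma PW_step (p : Fin (a + 2) × Fin (b + 2)) (c : Γab a b) :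
    (PW a b).step p c = (c.1 p.1, c.2 p.2) := rfl

lemma close_pos {T : Finset (Fin (a + 2) × Fin (b + 2))} (h : fγW a b ∈ T) :
    close (PW a b) (accW a b) T = insert (q0W a b) T := by
  unfold close
  rw [if_pos ⟨fγW a b, Finset.mem_inter.2 ⟨h, Finset.mem_singleton_self _⟩⟩]
  rfl

lemma close_neg {T : Finset (Fin (a + 2) × Fin (b + 2))} (h : fγW a b ∉ T) :
    close (PW a b) (accW a b) T = T := by
  unfold close
  rw [if_neg]
  rintro ⟨x, hx⟩
  rw [Finset.mem_inter] at hx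
  have hx2 : x = fγW a b := Finset.mem_singleton.1 hx.2
  exact h (hx2 ▸ hx.1)

end Witness

end SCAux
namespace SCAux

section Witness2

variable (a b : ℕ)

abbrev QW := Fin (a + 2) × Fin (b + 2)

abbrev StW := Option {S : Finset (QW a b) // Inv (PW a b) (accW a b) S}

abbrev BW := starDFA (PW a b) (accW a b)

def ReachW (x : StW a b) : Prop := ∃ w, (BW a b).eval w = x

lemma BW_step_some (S : Finset (QW a b)) (h : Inv (PW a b) (accW a b) S) (c : Γab a b) :
    (BW a b).step (some ⟨S, h⟩) c =
      some ⟨close (PW a b) (accW a b) (S.image (fun p => (c.1 p.1, c.2 p.2))),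
        inv_close _ _ (h.1.image _)⟩ := rfl

lemma BW_step_none (c : Γab a b) :
    (BW a b).step none c =
      some ⟨close (PW a b) (accW a b) {(c.1 0, c.2 0)},
        inv_close _ _ (Finset.singleton_nonempty _)⟩ := rfl

lemma someW_eq {S T : Finset (QW a b)} {h1 : Inv (PW a b) (accW a b) S}
    {h2 : Inv (PW a b) (accW a b) T} (h : S = T) :
    (some ⟨S, h1⟩ : StW a b) = some ⟨T, h2⟩ := by subst h; rfl

lemma inj_pair_symm (e1 : Equiv.Perm (Fin (a + 2))) (e2 : Equiv.Perm (Fin (b + 2))) :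
    Function.Injective (fun p : QW a b => (e1.symm p.1, e2.symm p.2)) := by
  intro p q h
  rw [Prod.ext_iff] at h ⊢
  exact ⟨e1.symm.injective h.1, e2.symm.injective h.2⟩

lemma image_pair_perm (e1 : Equiv.Perm (Fin (a + 2))) (e2 : Equiv.Perm (Fin (b + 2)))
    (T : Finset (QW a b)) :
    ((T.image (fun p => (e1.symm p.1, e2.symm p.2))).image
      (fun p : QW a b => (e1 p.1, e2 p.2))) = T := by
  rw [Finset.image_image]
  have h : ((fun p : QW a b => (e1 p.1, e2 p.2)) ∘
      (fun p : QW a b => (e1.symm p.1, e2.symm p.2))) = id := by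
    funext p
    simp [Prod.ext_iff]
  rw [h, Finset.image_id]

lemma exists_perm_two {β : Type} [DecidableEq β] {x y u v : β} (hxy : x ≠ y) (huv : u ≠ v) :
    ∃ e : Equiv.Perm β, e x = u ∧ e y = v := by
  refine ⟨(Equiv.swap x u).trans (Equiv.swap ((Equiv.swap x u) y) v), ?_, ?_⟩
  · rw [Equiv.trans_apply, Equiv.swap_apply_left]
    apply Equiv.swap_apply_of_ne_of_ne
    · intro h
      have h2 : (Equiv.swap x u) x = (Equiv.swap x u) y := by
        rw [Equiv.swap_apply_left]; exact h
      exact hxy ((Equiv.swap x u).injective h2)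
    · exact huv
  · rw [Equiv.trans_apply, Equiv.swap_apply_left]

lemma pair_or_line (S : Finset (QW a b)) (hq0 : q0W a b ∈ S) :
    (∃ s ∈ S, ∃ t ∈ S, s.1 ≠ t.1 ∧ s.2 ≠ t.2) ∨
      (∀ p ∈ S, p.1 = 0) ∨ (∀ p ∈ S, p.2 = 0) := by
  by_contra h
  push_neg at h
  obtain ⟨h1, h2, h3⟩ := h
  obtain ⟨p1, hp1, hp1'⟩ := h2
  obtain ⟨p2, hp2, hp2'⟩ := h3
  have e1 : p1.2 = 0 := h1 p1 hp1 (q0W a b) hq0 hp1'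
  have e2 : p2.1 = 0 := by
    by_contra hc
    exact hp2' (h1 p2 hp2 (q0W a b) hq0 hc)
  have h4 : p1.2 = p2.2 := h1 p1 hp1 p2 hp2 (by rw [e2]; exact hp1')
  rw [e1] at h4
  exact hp2' h4.symm

lemma reach_q0_sets (k : ℕ) : ∀ (S : Finset (QW a b)) (hS : Inv (PW a b) (accW a b) S),
    q0W a b ∈ S → S.card = k → ReachW a b (some ⟨S, hS⟩) := by
  induction k using Nat.strong_induction_on with
  | _ k IH =>
  have caseA : ∀ (S : Finset (QW a b)) (hS : Inv (PW a b) (accW a b) S),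
      q0W a b ∈ S → fγW a b ∈ S → S.card = k → ReachW a b (some ⟨S, hS⟩) := by
    intro S hS hq0 hfγ hcard
    have herase : fγW a b ∈ S.erase (q0W a b) :=
      Finset.mem_erase.2 ⟨fγW_ne_q0W a b, hfγ⟩
    obtain ⟨s0, hs0⟩ : (S.erase (q0W a b)).Nonempty := ⟨_, herase⟩
    set e1 := Equiv.swap (0 : Fin (a + 2)) s0.1 with he1
    set e2 := Equiv.swap (0 : Fin (b + 2)) s0.2 with he2
    set R := (S.erase (q0W a b)).image (fun p => (e1.symm p.1, e2.symm p.2)) with hRdef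
    have hq0R : q0W a b ∈ R := by
      rw [hRdef, Finset.mem_image]
      refine ⟨s0, hs0, ?_⟩
      have hh1 : e1.symm s0.1 = 0 := by
        rw [Equiv.symm_apply_eq, he1, Equiv.swap_apply_left]
      have hh2 : e2.symm s0.2 = 0 := by
        rw [Equiv.symm_apply_eq, he2, Equiv.swap_apply_left]
      show (e1.symm s0.1, e2.symm s0.2) = q0W a b
      rw [hh1, hh2]; rfl
    have hInvR : Inv (PW a b) (accW a b) R := ⟨⟨_, hq0R⟩, fun _ => hq0R⟩
    have hcardR : R.card = k - 1 := by
      rw [hRdef, Finset.card_image_of_injective _ (inj_pair_symm a b e1 e2),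
        Finset.card_erase_of_mem hq0, hcard]
    have hk1 : 1 ≤ k := by
      rw [← hcard]
      exact Finset.card_pos.2 ⟨_, hq0⟩
    obtain ⟨w, hw⟩ := IH (k - 1) (by omega) R hInvR hq0R hcardR
    refine ⟨w ++ [((e1 : Fin (a+2) → Fin (a+2)), (e2 : Fin (b+2) → Fin (b+2)))], ?_⟩
    rw [DFA.eval_append_singleton, hw, BW_step_some]
    apply someW_eq
    rw [hRdef]
    rw [show ((((S.erase (q0W a b)).image (fun p => (e1.symm p.1, e2.symm p.2))).image
      (fun p : QW a b => ((e1 : Fin (a+2) → Fin (a+2)) p.1,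
        (e2 : Fin (b+2) → Fin (b+2)) p.2)))) = S.erase (q0W a b) from
      image_pair_perm a b e1 e2 _]
    rw [close_pos a b herase, Finset.insert_erase hq0]
  intro S hS hq0 hcard
  by_cases hfγ : fγW a b ∈ S
  · exact caseA S hS hq0 hfγ hcard
  by_cases hk1 : S.card = 1
  · obtain ⟨x, hx⟩ := Finset.card_eq_one.1 hk1
    have hSq : S = {q0W a b} := by
      rw [hx] at hq0 ⊢
      rw [Finset.mem_singleton] at hq0
      rw [hq0]
    refine ⟨[((fun _ => 0 : Fin (a+2) → Fin (a+2)), (fun _ => 0 : Fin (b+2) → Fin (b+2)))], ?_⟩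
    have h0 : ([((fun _ => 0 : Fin (a+2) → Fin (a+2)),
        (fun _ => 0 : Fin (b+2) → Fin (b+2)))] : List (Γab a b)) = [] ++ [_] := rfl
    rw [h0, DFA.eval_append_singleton, DFA.eval_nil]
    show (BW a b).step none _ = _
    rw [BW_step_none]
    apply someW_eq
    rw [close_neg a b (by rw [Finset.mem_singleton]; exact fγW_ne_q0W a b)]
    exact hSq.symm
  have hk2 : 2 ≤ k := by
    have : 1 ≤ S.card := Finset.card_pos.2 ⟨_, hq0⟩
    omega
  rcases pair_or_line a b S hq0 with ⟨s, hsS, t, htS, hst1, hst2⟩ | hrow | hcol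
  · -- generic pair case
    obtain ⟨e1, he1a, he1b⟩ := exists_perm_two (Ne.symm (last_ne_zero' a)) hst1
    obtain ⟨e2, he2a, he2b⟩ := exists_perm_two (Ne.symm (last_ne_zero' b)) hst2
    set R := S.image (fun p => (e1.symm p.1, e2.symm p.2)) with hRdef
    have hq0R : q0W a b ∈ R := by
      rw [hRdef, Finset.mem_image]
      refine ⟨s, hsS, ?_⟩
      have hh1 : e1.symm s.1 = 0 := by rw [Equiv.symm_apply_eq, he1a]
      have hh2 : e2.symm s.2 = 0 := by rw [Equiv.symm_apply_eq, he2a]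
      show (e1.symm s.1, e2.symm s.2) = q0W a b
      rw [hh1, hh2]; rfl
    have hfγR : fγW a b ∈ R := by
      rw [hRdef, Finset.mem_image]
      refine ⟨t, htS, ?_⟩
      have hh1 : e1.symm t.1 = Fin.last (a + 1) := by rw [Equiv.symm_apply_eq, he1b]
      have hh2 : e2.symm t.2 = Fin.last (b + 1) := by rw [Equiv.symm_apply_eq, he2b]
      show (e1.symm t.1, e2.symm t.2) = fγW a b
      rw [hh1, hh2]; rfl
    have hInvR : Inv (PW a b) (accW a b) R := ⟨⟨_, hq0R⟩, fun _ => hq0R⟩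
    have hcardR : R.card = k := by
      rw [hRdef, Finset.card_image_of_injective _ (inj_pair_symm a b e1 e2), hcard]
    obtain ⟨w, hw⟩ := caseA R hInvR hq0R hfγR hcardR
    refine ⟨w ++ [((e1 : Fin (a+2) → Fin (a+2)), (e2 : Fin (b+2) → Fin (b+2)))], ?_⟩
    rw [DFA.eval_append_singleton, hw, BW_step_some]
    apply someW_eq
    rw [hRdef]
    rw [show (((S.image (fun p => (e1.symm p.1, e2.symm p.2))).image
      (fun p : QW a b => ((e1 : Fin (a+2) → Fin (a+2)) p.1,
        (e2 : Fin (b+2) → Fin (b+2)) p.2)))) = S from image_pair_perm a b e1 e2 _]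
    rw [close_neg a b hfγ]
  · -- row case : all first coordinates are 0
    set B0 := S.image Prod.snd with hB0
    have hcardB0 : B0.card = k := by
      rw [hB0, Finset.card_image_of_injOn, hcard]
      intro p hp q hq hpq
      exact Prod.ext_iff.2 ⟨by rw [hrow p hp, hrow q hq], hpq⟩
    have h0B0 : (0 : Fin (b + 2)) ∈ B0 :=
      Finset.mem_image.2 ⟨q0W a b, hq0, rfl⟩
    have hex : ∃ b1, b1 ∈ B0 ∧ b1 ≠ 0 ∧ (Fin.last (b+1) ∈ B0 → b1 = Fin.last (b+1)) := by
      by_cases hnl : Fin.last (b+1) ∈ B0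
      · exact ⟨_, hnl, last_ne_zero' b, fun _ => rfl⟩
      · have hne : (B0.erase 0).Nonempty := by
          rw [← Finset.card_pos, Finset.card_erase_of_mem h0B0, hcardB0]; omega
        obtain ⟨b1, hb1⟩ := hne
        rw [Finset.mem_erase] at hb1
        exact ⟨b1, hb1.2, hb1.1, fun h => absurd h hnl⟩
    obtain ⟨b1, hb1B, hb1ne, hb1nl⟩ := hex
    set B' := insert (Fin.last (b+1)) (B0.erase b1) with hB'
    have hnlB' : Fin.last (b+1) ∈ B' := Finset.mem_insert_self _ _
    have h0B' : (0 : Fin (b + 2)) ∈ B' := by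
      rw [hB']
      exact Finset.mem_insert_of_mem (Finset.mem_erase.2 ⟨fun h => hb1ne h.symm, h0B0⟩)
    have hnl_not : Fin.last (b+1) ∉ B0.erase b1 := by
      by_cases hnl : Fin.last (b+1) ∈ B0
      · rw [hb1nl hnl]; exact Finset.notMem_erase _ _
      · intro hc; exact hnl (Finset.mem_of_mem_erase hc)
    have hcardB' : B'.card = k := by
      rw [hB', Finset.card_insert_of_notMem hnl_not, Finset.card_erase_of_mem hb1B, hcardB0]
      omega
    have hcc : B'.card = B0.card := by rw [hcardB', hcardB0]
    set e := (Finset.equivFinOfCardEq hcardB').trans (Finset.equivFinOfCardEq hcardB0).symm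
      with he
    set gg : Fin (b+2) → Fin (b+2) :=
      fun y => if hy : y ∈ B' then (e ⟨y, hy⟩ : Fin (b+2)) else 0 with hgg
    have himg : B'.image gg = B0 := by
      ext y
      rw [Finset.mem_image]
      constructor
      · rintro ⟨z, hz, rfl⟩
        rw [hgg]
        dsimp only
        rw [dif_pos hz]
        exact (e ⟨z, hz⟩).2
      · intro hy
        refine ⟨(e.symm ⟨y, hy⟩ : Fin (b+2)), (e.symm ⟨y, hy⟩).2, ?_⟩
        rw [hgg]
        dsimp only
        rw [dif_pos (e.symm ⟨y, hy⟩).2]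
        rw [show (⟨(e.symm ⟨y, hy⟩ : Fin (b+2)), (e.symm ⟨y, hy⟩).2⟩ :
          {x // x ∈ B'}) = e.symm ⟨y, hy⟩ from Subtype.ext rfl]
        rw [Equiv.apply_symm_apply]
    set ψ : Fin (b+2) → Fin (a+2) := fun y => if y = Fin.last (b+1) then Fin.last (a+1) else 0
      with hψ
    set R := B'.image (fun y => (ψ y, y)) with hRdef
    have hcardR : R.card = k := by
      rw [hRdef, Finset.card_image_of_injective, hcardB']
      intro y z h
      exact (Prod.ext_iff.1 h).2
    have hq0R : q0W a b ∈ R := by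
      refine Finset.mem_image.2 ⟨0, h0B', ?_⟩
      rw [hψ]
      dsimp only
      rw [if_neg (Ne.symm (last_ne_zero' b))]
      rfl
    have hfγR : fγW a b ∈ R := by
      refine Finset.mem_image.2 ⟨Fin.last (b+1), hnlB', ?_⟩
      rw [hψ]
      dsimp only
      rw [if_pos rfl]
      rfl
    have hInvR : Inv (PW a b) (accW a b) R := ⟨⟨_, hq0R⟩, fun _ => hq0R⟩
    obtain ⟨w, hw⟩ := caseA R hInvR hq0R hfγR hcardR
    refine ⟨w ++ [((fun _ => 0 : Fin (a+2) → Fin (a+2)), gg)], ?_⟩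
    rw [DFA.eval_append_singleton, hw, BW_step_some]
    apply someW_eq
    have himg2 : R.image (fun p : QW a b => ((fun _ : Fin (a+2) => (0 : Fin (a+2))) p.1, gg p.2))
        = S := by
      rw [hRdef, Finset.image_image]
      have hcomp : ((fun p : QW a b => ((0 : Fin (a+2)), gg p.2)) ∘ (fun y => (ψ y, y)))
          = fun y => ((0 : Fin (a+2)), gg y) := rfl
      rw [hcomp]
      have h3 : B'.image (fun y => ((0 : Fin (a+2)), gg y))
          = (B'.image gg).image (fun x => ((0 : Fin (a+2)), x)) := by
        rw [Finset.image_image]; rfl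
      rw [h3, himg]
      ext p
      rw [Finset.mem_image]
      constructor
      · rintro ⟨y, hy, rfl⟩
        obtain ⟨q, hqS, rfl⟩ := Finset.mem_image.1 hy
        rw [show ((0 : Fin (a+2)), q.2) = q from Prod.ext_iff.2 ⟨(hrow q hqS).symm, rfl⟩]
        exact hqS
      · intro hp
        exact ⟨p.2, Finset.mem_image.2 ⟨p, hp, rfl⟩, Prod.ext_iff.2 ⟨(hrow p hp).symm, rfl⟩⟩
    rw [himg2, close_neg a b hfγ]
  · -- column case : all second coordinates are 0
    set B0 := S.image Prod.fst with hB0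
    have hcardB0 : B0.card = k := by
      rw [hB0, Finset.card_image_of_injOn, hcard]
      intro p hp q hq hpq
      exact Prod.ext_iff.2 ⟨hpq, by rw [hcol p hp, hcol q hq]⟩
    have h0B0 : (0 : Fin (a + 2)) ∈ B0 :=
      Finset.mem_image.2 ⟨q0W a b, hq0, rfl⟩
    have hex : ∃ b1, b1 ∈ B0 ∧ b1 ≠ 0 ∧ (Fin.last (a+1) ∈ B0 → b1 = Fin.last (a+1)) := by
      by_cases hnl : Fin.last (a+1) ∈ B0
      · exact ⟨_, hnl, last_ne_zero' a, fun _ => rfl⟩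
      · have hne : (B0.erase 0).Nonempty := by
          rw [← Finset.card_pos, Finset.card_erase_of_mem h0B0, hcardB0]; omega
        obtain ⟨b1, hb1⟩ := hne
        rw [Finset.mem_erase] at hb1
        exact ⟨b1, hb1.2, hb1.1, fun h => absurd h hnl⟩
    obtain ⟨b1, hb1B, hb1ne, hb1nl⟩ := hex
    set B' := insert (Fin.last (a+1)) (B0.erase b1) with hB'
    have hnlB' : Fin.last (a+1) ∈ B' := Finset.mem_insert_self _ _
    have h0B' : (0 : Fin (a + 2)) ∈ B' := by
      rw [hB']
      exact Finset.mem_insert_of_mem (Finset.mem_erase.2 ⟨fun h => hb1ne h.symm, h0B0⟩)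
    have hnl_not : Fin.last (a+1) ∉ B0.erase b1 := by
      by_cases hnl : Fin.last (a+1) ∈ B0
      · rw [hb1nl hnl]; exact Finset.notMem_erase _ _
      · intro hc; exact hnl (Finset.mem_of_mem_erase hc)
    have hcardB' : B'.card = k := by
      rw [hB', Finset.card_insert_of_notMem hnl_not, Finset.card_erase_of_mem hb1B, hcardB0]
      omega
    set e := (Finset.equivFinOfCardEq hcardB').trans (Finset.equivFinOfCardEq hcardB0).symm
      with he
    set gg : Fin (a+2) → Fin (a+2) :=
      fun y => if hy : y ∈ B' then (e ⟨y, hy⟩ : Fin (a+2)) else 0 with hgg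
    have himg : B'.image gg = B0 := by
      ext y
      rw [Finset.mem_image]
      constructor
      · rintro ⟨z, hz, rfl⟩
        rw [hgg]
        dsimp only
        rw [dif_pos hz]
        exact (e ⟨z, hz⟩).2
      · intro hy
        refine ⟨(e.symm ⟨y, hy⟩ : Fin (a+2)), (e.symm ⟨y, hy⟩).2, ?_⟩
        rw [hgg]
        dsimp only
        rw [dif_pos (e.symm ⟨y, hy⟩).2]
        rw [show (⟨(e.symm ⟨y, hy⟩ : Fin (a+2)), (e.symm ⟨y, hy⟩).2⟩ :
          {x // x ∈ B'}) = e.symm ⟨y, hy⟩ from Subtype.ext rfl]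
        rw [Equiv.apply_symm_apply]
    set ψ : Fin (a+2) → Fin (b+2) := fun y => if y = Fin.last (a+1) then Fin.last (b+1) else 0
      with hψ
    set R := B'.image (fun y => (y, ψ y)) with hRdef
    have hcardR : R.card = k := by
      rw [hRdef, Finset.card_image_of_injective, hcardB']
      intro y z h
      exact (Prod.ext_iff.1 h).1
    have hq0R : q0W a b ∈ R := by
      refine Finset.mem_image.2 ⟨0, h0B', ?_⟩
      rw [hψ]
      dsimp only
      rw [if_neg (Ne.symm (last_ne_zero' a))]
      rfl
    have hfγR : fγW a b ∈ R := by
      refine Finset.mem_image.2 ⟨Fin.last (a+1), hnlB', ?_⟩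
      rw [hψ]
      dsimp only
      rw [if_pos rfl]
      rfl
    have hInvR : Inv (PW a b) (accW a b) R := ⟨⟨_, hq0R⟩, fun _ => hq0R⟩
    obtain ⟨w, hw⟩ := caseA R hInvR hq0R hfγR hcardR
    refine ⟨w ++ [(gg, (fun _ => 0 : Fin (b+2) → Fin (b+2)))], ?_⟩
    rw [DFA.eval_append_singleton, hw, BW_step_some]
    apply someW_eq
    have himg2 : R.image (fun p : QW a b => (gg p.1, (fun _ : Fin (b+2) => (0 : Fin (b+2))) p.2))
        = S := by
      rw [hRdef, Finset.image_image]
      have hcomp : ((fun p : QW a b => (gg p.1, (0 : Fin (b+2)))) ∘ (fun y => (y, ψ y)))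
          = fun y => (gg y, (0 : Fin (b+2))) := rfl
      rw [hcomp]
      have h3 : B'.image (fun y => (gg y, (0 : Fin (b+2))))
          = (B'.image gg).image (fun x => (x, (0 : Fin (b+2)))) := by
        rw [Finset.image_image]; rfl
      rw [h3, himg]
      ext p
      rw [Finset.mem_image]
      constructor
      · rintro ⟨y, hy, rfl⟩
        obtain ⟨q, hqS, rfl⟩ := Finset.mem_image.1 hy
        rw [show (q.1, (0 : Fin (b+2))) = q from Prod.ext_iff.2 ⟨rfl, (hcol q hqS).symm⟩]
        exact hqS
      · intro hp
        exact ⟨p.1, Finset.mem_image.2 ⟨p, hp, rfl⟩, Prod.ext_iff.2 ⟨rfl, (hcol p hp).symm⟩⟩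
    rw [himg2, close_neg a b hfγ]

lemma reach_all (x : StW a b) : ReachW a b x := by
  cases x with
  | none => exact ⟨[], rfl⟩
  | some S =>
    obtain ⟨S, hS⟩ := S
    by_cases hq0 : q0W a b ∈ S
    · exact reach_q0_sets a b S.card S hS hq0 rfl
    · have hfγ : fγW a b ∉ S := by
        intro hfγ
        exact hq0 (hS.2 ⟨fγW a b, Finset.mem_inter.2 ⟨hfγ, Finset.mem_singleton_self _⟩⟩)
      obtain ⟨s0, hs0⟩ := hS.1
      set e1 := Equiv.swap (0 : Fin (a + 2)) s0.1 with he1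
      set e2 := Equiv.swap (0 : Fin (b + 2)) s0.2 with he2
      set R := S.image (fun p => (e1.symm p.1, e2.symm p.2)) with hRdef
      have hq0R : q0W a b ∈ R := by
        rw [hRdef, Finset.mem_image]
        refine ⟨s0, hs0, ?_⟩
        have hh1 : e1.symm s0.1 = 0 := by rw [Equiv.symm_apply_eq, he1, Equiv.swap_apply_left]
        have hh2 : e2.symm s0.2 = 0 := by rw [Equiv.symm_apply_eq, he2, Equiv.swap_apply_left]
        show (e1.symm s0.1, e2.symm s0.2) = q0W a b
        rw [hh1, hh2]; rfl
      have hInvR : Inv (PW a b) (accW a b) R := ⟨⟨_, hq0R⟩, fun _ => hq0R⟩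
      obtain ⟨w, hw⟩ := reach_q0_sets a b R.card R hInvR hq0R rfl
      refine ⟨w ++ [((e1 : Fin (a+2) → Fin (a+2)), (e2 : Fin (b+2) → Fin (b+2)))], ?_⟩
      rw [DFA.eval_append_singleton, hw, BW_step_some]
      apply someW_eq
      rw [hRdef]
      rw [show (((S.image (fun p => (e1.symm p.1, e2.symm p.2))).image
        (fun p : QW a b => ((e1 : Fin (a+2) → Fin (a+2)) p.1,
          (e2 : Fin (b+2) → Fin (b+2)) p.2)))) = S from image_pair_perm a b e1 e2 _]
      rw [close_neg a b hfγ]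

end Witness2

end SCAux
namespace SCAux

section Witness3

variable (a b : ℕ)

lemma fγ_mem_close (T : Finset (QW a b)) :
    fγW a b ∈ close (PW a b) (accW a b) T ↔ fγW a b ∈ T := by
  rw [mem_close_iff]
  constructor
  · rintro (h | ⟨_, h⟩)
    · exact h
    · exact absurd h (fγW_ne_q0W a b)
  · exact Or.inl

lemma accept_some_iff (S : Finset (QW a b)) (hS : Inv (PW a b) (accW a b) S) :
    (some ⟨S, hS⟩ : StW a b) ∈ (BW a b).accept ↔ fγW a b ∈ S := by
  rw [some_mem_accept]
  constructor
  · rintro ⟨x, hx⟩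
    rw [Finset.mem_inter] at hx
    exact (Finset.mem_singleton.1 hx.2) ▸ hx.1
  · intro h
    exact ⟨fγW a b, Finset.mem_inter.2 ⟨h, Finset.mem_singleton_self _⟩⟩

lemma fγ_mem_image_iff (S : Finset (QW a b)) (q : QW a b) :
    fγW a b ∈ S.image (fun p : QW a b =>
      ((fun x => if x = q.1 then Fin.last (a+1) else 0) p.1,
       (fun y => if y = q.2 then Fin.last (b+1) else 0) p.2)) ↔ q ∈ S := by
  rw [Finset.mem_image]
  constructor
  · rintro ⟨p, hp, hpe⟩
    rw [Prod.ext_iff] at hpe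
    obtain ⟨hp1, hp2⟩ := hpe
    dsimp at hp1 hp2
    have h1 : p.1 = q.1 := by
      by_contra hc
      rw [if_neg hc] at hp1
      exact last_ne_zero' a hp1.symm
    have h2 : p.2 = q.2 := by
      by_contra hc
      rw [if_neg hc] at hp2
      exact last_ne_zero' b hp2.symm
    rwa [← Prod.ext_iff.2 ⟨h1, h2⟩]
  · intro hq
    refine ⟨q, hq, ?_⟩
    show (if q.1 = q.1 then _ else _, if q.2 = q.2 then _ else _) = fγW a b
    rw [if_pos rfl, if_pos rfl]
    rfl

lemma disc_some {S S' : Finset (QW a b)} (hS : Inv (PW a b) (accW a b) S)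
    (hS' : Inv (PW a b) (accW a b) S') {q : QW a b} (hq : q ∈ S) (hq' : q ∉ S') :
    ∃ z, (BW a b).evalFrom (some ⟨S, hS⟩) z ∈ (BW a b).accept ∧
      ¬ (BW a b).evalFrom (some ⟨S', hS'⟩) z ∈ (BW a b).accept := by
  refine ⟨[((fun x => if x = q.1 then Fin.last (a+1) else 0 : Fin (a+2) → Fin (a+2)),
    (fun y => if y = q.2 then Fin.last (b+1) else 0 : Fin (b+2) → Fin (b+2)))], ?_, ?_⟩
  · show (BW a b).step (some ⟨S, hS⟩) _ ∈ (BW a b).accept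
    rw [BW_step_some, accept_some_iff, fγ_mem_close, fγ_mem_image_iff]
    exact hq
  · show ¬ (BW a b).step (some ⟨S', hS'⟩) _ ∈ (BW a b).accept
    rw [BW_step_some, accept_some_iff, fγ_mem_close, fγ_mem_image_iff]
    exact hq'

lemma disc_none_some (S : Finset (QW a b)) (hS : Inv (PW a b) (accW a b) S) :
    ∃ z, ¬((BW a b).evalFrom none z ∈ (BW a b).accept ↔
      (BW a b).evalFrom (some ⟨S, hS⟩) z ∈ (BW a b).accept) := by
  by_cases hf : fγW a b ∈ S
  · refine ⟨[((fun x => x : Fin (a+2) → Fin (a+2)), (fun y => y : Fin (b+2) → Fin (b+2)))], ?_⟩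
    have hnone : (BW a b).evalFrom none
        [((fun x => x : Fin (a+2) → Fin (a+2)), (fun y => y : Fin (b+2) → Fin (b+2)))] =
        some ⟨close (PW a b) (accW a b) {q0W a b},
          inv_close _ _ (Finset.singleton_nonempty _)⟩ := BW_step_none a b _
    have hsome : (BW a b).evalFrom (some ⟨S, hS⟩)
        [((fun x => x : Fin (a+2) → Fin (a+2)), (fun y => y : Fin (b+2) → Fin (b+2)))] =
        some ⟨close (PW a b) (accW a b) (S.image (fun p : QW a b => (p.1, p.2))),
          inv_close _ _ (hS.1.image _)⟩ := BW_step_some a b S hS _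
    rw [hnone, hsome, accept_some_iff, accept_some_iff, fγ_mem_close, fγ_mem_close,
      Finset.mem_singleton]
    intro h
    apply fγW_ne_q0W a b
    apply h.2
    rw [show (fun p : QW a b => (p.1, p.2)) = id from rfl, Finset.image_id]
    exact hf
  · refine ⟨[], ?_⟩
    show ¬((none : StW a b) ∈ _ ↔ _ ∈ _)
    rw [DFA.evalFrom_nil, accept_some_iff]
    intro h
    exact hf (h.1 (none_mem_accept _ _))

lemma disc_all : ∀ x y : StW a b, x ≠ y →
    ∃ z, ¬((BW a b).evalFrom x z ∈ (BW a b).accept ↔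
      (BW a b).evalFrom y z ∈ (BW a b).accept) := by
  intro x y hxy
  match x, y with
  | none, none => exact absurd rfl hxy
  | none, some ⟨S, hS⟩ => exact disc_none_some a b S hS
  | some ⟨S, hS⟩, none =>
    obtain ⟨z, hz⟩ := disc_none_some a b S hS
    exact ⟨z, fun h => hz h.symm⟩
  | some ⟨S, hS⟩, some ⟨S', hS'⟩ =>
    have hSS : S ≠ S' := fun h => hxy (by subst h; rfl)
    by_cases hsub : S ⊆ S'
    · have hns : ¬ S' ⊆ S := fun h => hSS (Finset.Subset.antisymm hsub h)
      obtain ⟨q, hq, hq'⟩ := Finset.not_subset.1 hns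
      obtain ⟨z, hz1, hz2⟩ := disc_some a b hS' hS hq hq'
      exact ⟨z, fun h => hz2 (h.mpr hz1)⟩
    · obtain ⟨q, hq, hq'⟩ := Finset.not_subset.1 hsub
      obtain ⟨z, hz1, hz2⟩ := disc_some a b hS hS' hq hq'
      exact ⟨z, fun h => hz2 (h.mp hz1)⟩

end Witness3

end SCAux
namespace SCAux

lemma cardQW (a b : ℕ) : Fintype.card (QW a b) = (a + 2) * (b + 2) := by
  simp [Fintype.card_prod]

lemma sc_star_witness (a b : ℕ) :
    sc (((dfa1 a b).accepts ⊓ (dfa2 a b).accepts)∗) = 3 * 2 ^ ((a + 2) * (b + 2) - 2) := by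
  have hPacc : (PW a b).accepts = (dfa1 a b).accepts ⊓ (dfa2 a b).accepts :=
    prodDFA_accepts _ _
  have hBacc : (BW a b).accepts = ((PW a b).accepts)∗ := starDFA_accepts _ (accW_coe a b)
  have h1 : sc ((BW a b).accepts) = Fintype.card (StW a b) :=
    sc_eq_card _ (fun s => reach_all a b s) (disc_all a b)
  rw [hBacc, hPacc] at h1
  rw [h1]
  have h2 := card_inv_eq (PW a b) (fγW a b)
    (by rw [PW_start]; exact fγW_ne_q0W a b)
    (by rw [cardQW]; nlinarith)
  rw [cardQW] at h2
  exact h2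

end SCAux

open SCAux

/-- the state complexity of the combined operation
`(L1, L2) ↦ (L1 ∩ L2)*` at `(n1, n2)` equals `3 · 2 ^ (n1·n2 - 2)`:
there is a witness reaching this bound, and no pair of regular languages of state
complexities `n1, n2` exceeds it. -/
theorem stmt4 (n1 n2 : ℕ) (h1 : 2 ≤ n1) (h2 : 2 ≤ n2) :
    (∃ (Γ : Type) (_ : Fintype Γ) (L1 L2 : Language Γ),
      (∃ m, recognizedBy L1 m) ∧ (∃ m, recognizedBy L2 m) ∧
      sc L1 = n1 ∧ sc L2 = n2 ∧ sc ((L1 ⊓ L2)∗) = 3 * 2 ^ (n1 * n2 - 2)) ∧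
    (∀ (Γ : Type) (_ : Fintype Γ) (L1 L2 : Language Γ),
      (∃ m, recognizedBy L1 m) → (∃ m, recognizedBy L2 m) →
      sc L1 = n1 → sc L2 = n2 → sc ((L1 ⊓ L2)∗) ≤ 3 * 2 ^ (n1 * n2 - 2)) := by
  obtain ⟨a, rfl⟩ : ∃ a, n1 = a + 2 := ⟨n1 - 2, by omega⟩
  obtain ⟨b, rfl⟩ : ∃ b, n2 = b + 2 := ⟨n2 - 2, by omega⟩
  constructor
  · refine ⟨Γab a b, inferInstance, (dfa1 a b).accepts, (dfa2 a b).accepts,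
      ⟨_, recognizedBy_card (dfa1 a b)⟩, ⟨_, recognizedBy_card (dfa2 a b)⟩,
      sc_dfa1 a b, sc_dfa2 a b, sc_star_witness a b⟩
  · intro Γ _ L1 L2 h1ex h2ex hsc1 hsc2
    have r1 : recognizedBy L1 (a + 2) := hsc1 ▸ sc_recognizes h1ex
    have r2 : recognizedBy L2 (b + 2) := hsc2 ▸ sc_recognizes h2ex
    obtain ⟨M1, hM1⟩ := r1
    obtain ⟨M2, hM2⟩ := r2
    have hcard : Fintype.card (Fin (a + 2) × Fin (b + 2)) = (a + 2) * (b + 2) := by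
      simp [Fintype.card_prod]
    have hle := sc_kstar_le (prodDFA M1 M2) (by rw [hcard]; nlinarith)
    rw [prodDFA_accepts, hM1, hM2, hcard] at hle
    exact hle
end

section
/- Let n ≥ 1, let F ⊆ Fin n, and let a ≠ b be elements of Fin n. Define g_{a,b} : Fin n → Fin n by g_{a,b}(x) = a if x ∈ F and g_{a,b}(x) = b otherwise, and similarly g_{b,a} with the roles of a and b exchanged. Then for every function h : Fin n → Fin n, h(g_{a,b}(h(g_{a,b}(0)))) ∈ F if and only if h(g_{b,a}(h(g_{b,a}(0)))) ∈ F. (Equivalently, in the DFA with states Fin n → Fin n, alphabet Fin n → Fin n, initial state the identity, transition δ(g, f) = f ∘ g, and final states {g | g(g(0)) ∈ F}, the states g_{a,b} and g_{b,a} are not separable.) -/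
/-!
Write `A` for `h a ∈ F` and `B` for `h b ∈ F`. Membership of `h (g_{a,b} y)` in `F` is
`if y ∈ F then A else B`, so the word `h` read twice from `g_{a,b}` accepts iff
`if (if 0 ∈ F then A else B) then A else B`, which is the majority of `0 ∈ F`, `A`, `B`.
Exchanging `a` and `b` exchanges `A` and `B`, and the majority function is symmetric.
-/

attribute [local instance] Classical.propDecidable

section Select

variable {α : Type*} {F : Set α} {a b : α} {g : α → α}

theorem apply_select_mem_iff (hg : ∀ x, g x = if x ∈ F then a else b) (h : α → α) (x : α) :
    h (g x) ∈ F ↔ if x ∈ F then h a ∈ F else h b ∈ F := by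
  rw [hg]
  split_ifs <;> rfl

theorem apply_select_apply_select_mem_iff (hg : ∀ x, g x = if x ∈ F then a else b)
    (h : α → α) (x : α) :
    h (g (h (g x))) ∈ F ↔ if x ∈ F then h a ∈ F ∨ h b ∈ F else h a ∈ F ∧ h b ∈ F := by
  rw [apply_select_mem_iff hg, apply_select_mem_iff hg]
  split_ifs <;> tauto

end Select

theorem stmt5_general (n : ℕ) (hn : 1 ≤ n) (F : Set (Fin n)) (a b : Fin n)
    (gab gba : Fin n → Fin n)
    (hgab : ∀ x, gab x = if x ∈ F then a else b)
    (hgba : ∀ x, gba x = if x ∈ F then b else a)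
    (h : Fin n → Fin n) :
    h (gab (h (gab ⟨0, hn⟩))) ∈ F ↔ h (gba (h (gba ⟨0, hn⟩))) ∈ F := by
  rw [apply_select_apply_select_mem_iff hgab, apply_select_apply_select_mem_iff hgba, or_comm,
    and_comm]

/-- in the `SRoot` automaton, the states `g_{a,b}` and `g_{b,a}` are not
separable: for every `h`, `h (g_{a,b} (h (g_{a,b} 0))) ∈ F` iff
`h (g_{b,a} (h (g_{b,a} 0))) ∈ F`. -/
theorem stmt5 (n : ℕ) (hn : 1 ≤ n) (F : Set (Fin n)) (a b : Fin n) (hab : a ≠ b)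
    (gab gba : Fin n → Fin n)
    (hgab : ∀ x, gab x = if x ∈ F then a else b)
    (hgba : ∀ x, gba x = if x ∈ F then b else a)
    (h : Fin n → Fin n) :
    h (gab (h (gab ⟨0, hn⟩))) ∈ F ↔ h (gba (h (gba ⟨0, hn⟩))) ∈ F :=
  stmt5_general n hn F a b gab gba hgab hgba h
end

section
/- Let n > 2 be an integer. For every regular language L over any finite alphabet with sc(L) ≤ n, the square root √L = {w | w·w ∈ L} satisfies sc(√L) ≤ n^n − n(n−1)/2. -/
/-- The square root of a language: `√L = {w | w·w ∈ L}`. -/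
def sqrtLang {α : Type} (L : Language α) : Language α :=
  {w | w ++ w ∈ L}

/-!
A DFA `M` for `L` yields a DFA for `√L` on the transformations `Q → Q`: after reading `w` from
`id` it sits at `δ_w`, and it accepts iff `δ_w (δ_w q₀) ∈ F`. This gives `n ^ n` states. For
`i < j`, the two transformations sending `F` to `i` and its complement to `j`, or the other
way round, accept the same words; they are distinct when `∅ ≠ F ≠ Q`, so by Myhill–Nerode
`n (n - 1) / 2` states can be saved. When `F` is `∅` or `Q`, all states accept the same
language.
-/

open Function Set

namespace DFA

variable {α σ τ : Type}

theorem exists_accepts_eq_of_injective (M : DFA α σ) {e : σ → τ} (he : Injective e) :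
    ∃ N : DFA α τ, N.accepts = M.accepts := by
  have : Nonempty σ := ⟨M.start⟩
  set r := invFun e
  have hr : LeftInverse r e := leftInverse_invFun he
  let N : DFA α τ := ⟨fun q a => e (M.step (r q) a), e M.start, r ⁻¹' M.accept⟩
  have hN : ∀ w s, N.evalFrom (e s) w = e (M.evalFrom s w) := by
    intro w
    induction w with
    | nil => exact fun _ => rfl
    | cons a w ih => intro s; simp only [evalFrom_cons, N, hr s, ih]
  refine ⟨N, ?_⟩
  ext w
  simp only [mem_accepts, eval, hN, N, mem_preimage, hr _]

end DFA

theorem recognizedBy_of_natCard_le {α σ : Type} [Finite σ] (M : DFA α σ) {m : ℕ}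
    (hm : Nat.card σ ≤ m) : recognizedBy M.accepts m :=
  M.exists_accepts_eq_of_injective ((Fin.castLE_injective hm).comp (Finite.equivFin σ).injective)

theorem recognizedBy.mono {α : Type} {L : Language α} {m k : ℕ} (hL : recognizedBy L m)
    (hmk : m ≤ k) : recognizedBy L k := by
  obtain ⟨M, rfl⟩ := hL
  exact recognizedBy_of_natCard_le M (by simpa using hmk)

theorem recognizedBy_of_sc_le {α : Type} {L : Language α} (hreg : ∃ m, recognizedBy L m) {n : ℕ}
    (hn : sc L ≤ n) : recognizedBy L n :=
  recognizedBy.mono (Nat.sInf_mem hreg) hn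

theorem recognizedBy_of_ncard_range_acceptsFrom_le {α σ : Type} [Finite σ] (M : DFA α σ)
    {m : ℕ} (hm : (range M.acceptsFrom).ncard ≤ m) : recognizedBy M.accepts m := by
  have hsub : range M.accepts.leftQuotient ⊆ range M.acceptsFrom := by
    rw [Language.leftQuotient_accepts]
    exact range_comp_subset_range _ _
  have := ((finite_range M.acceptsFrom).subset hsub).to_subtype
  have hcard : Nat.card (range M.accepts.leftQuotient) ≤ m :=
    (ncard_le_ncard hsub (finite_range _)).trans hm
  simpa using recognizedBy_of_natCard_le M.accepts.toDFA hcard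

theorem Set.piecewise_const_injective {σ : Type} {F : Set σ} [DecidablePred (· ∈ F)] {a b : σ}
    (ha : a ∈ F) (hb : b ∉ F) :
    Injective fun p : σ × σ => F.piecewise (fun _ => p.1) (fun _ => p.2) := by
  intro p p' h
  have h₁ := congrFun h a
  have h₂ := congrFun h b
  simp only [piecewise_eq_of_mem _ _ _ ha, piecewise_eq_of_notMem _ _ _ hb] at h₁ h₂
  exact Prod.ext h₁ h₂

theorem Set.ncard_range_le_card_sub {β γ : Type} [Fintype β] [DecidableEq β] (g : β → γ)
    (B : Finset β) (hB : ∀ b ∈ B, ∃ c ∉ B, g c = g b) :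
    (range g).ncard ≤ Fintype.card β - B.card := by
  have hsub : range g ⊆ g '' ↑(Finset.univ \ B) := by
    rintro _ ⟨b, rfl⟩
    by_cases hb : b ∈ B
    · obtain ⟨c, hc, hcb⟩ := hB b hb
      exact ⟨c, by simpa using hc, hcb⟩
    · exact ⟨b, by simpa using hb, rfl⟩
  calc (range g).ncard ≤ (g '' ↑(Finset.univ \ B)).ncard := ncard_le_ncard hsub (toFinite _)
    _ ≤ (↑(Finset.univ \ B) : Set β).ncard := ncard_image_le (toFinite _)
    _ = Fintype.card β - B.card := by
      rw [ncard_coe_finset, Finset.card_sdiff_of_subset (Finset.subset_univ B), Finset.card_univ]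

theorem Nat.choose_two_lt_pow_self (n : ℕ) : n.choose 2 < n ^ n := by
  rcases Nat.lt_or_ge n 2 with hn | hn
  · interval_cases n <;> decide
  · calc n.choose 2 < 2 ^ n := Nat.choose_lt_two_pow n 2 (by omega)
      _ ≤ n ^ n := Nat.pow_le_pow_left hn n

namespace DFA

variable {α σ : Type}

def sqrt (M : DFA α σ) : DFA α (σ → σ) where
  step f a q := M.step (f q) a
  start := id
  accept := {f | f (f M.start) ∈ M.accept}

variable (M : DFA α σ)

theorem evalFrom_sqrt (f : σ → σ) (w : List α) :
    M.sqrt.evalFrom f w = fun q => M.evalFrom (f q) w := by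
  induction w generalizing f with
  | nil => rfl
  | cons a w ih => exact ih _

theorem mem_acceptsFrom_sqrt {f : σ → σ} {w : List α} :
    w ∈ M.sqrt.acceptsFrom f ↔ M.evalFrom (f (M.evalFrom (f M.start) w)) w ∈ M.accept := by
  simp only [mem_acceptsFrom, evalFrom_sqrt]
  rfl

theorem accepts_sqrt : M.sqrt.accepts = sqrtLang M.accepts := by
  ext w
  rw [accepts, mem_acceptsFrom_sqrt]
  change _ ↔ M.evalFrom M.start (w ++ w) ∈ M.accept
  rw [evalFrom_of_append]
  rfl

theorem acceptsFrom_sqrt_piecewise_comm [DecidablePred (· ∈ M.accept)] (i j : σ) :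
    M.sqrt.acceptsFrom (M.accept.piecewise (fun _ => i) (fun _ => j)) =
      M.sqrt.acceptsFrom (M.accept.piecewise (fun _ => j) (fun _ => i)) := by
  ext w
  simp only [mem_acceptsFrom_sqrt, Set.piecewise]
  -- both sides say `δ_w i ∈ F ∨ δ_w j ∈ F` if `q₀ ∈ F`, and `δ_w i ∈ F ∧ δ_w j ∈ F` otherwise
  by_cases h₀ : M.start ∈ M.accept <;> by_cases hi : M.evalFrom i w ∈ M.accept <;>
    by_cases hj : M.evalFrom j w ∈ M.accept <;> simp [h₀, hi, hj]

theorem ncard_range_acceptsFrom_sqrt_le [Fintype σ] [LinearOrder σ] :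
    (range M.sqrt.acceptsFrom).ncard ≤
      Fintype.card σ ^ Fintype.card σ - (Fintype.card σ).choose 2 := by
  classical
  set F := M.accept
  by_cases hF : ∃ a ∈ F, ∃ b, b ∉ F
  · obtain ⟨a, ha, b, hb⟩ := hF
    set S : Finset (σ × σ) := {p | p.1 < p.2}
    set B := S.image fun p => F.piecewise (fun _ => p.2) (fun _ => p.1)
    have hinj := Set.piecewise_const_injective ha hb
    have hBcard : B.card = (Fintype.card σ).choose 2 := by
      rw [← Fintype.card_product_filter_lt]
      exact Finset.card_image_of_injective S (hinj.comp Prod.swap_injective)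
    have hmerge : ∀ f ∈ B, ∃ g ∉ B, M.sqrt.acceptsFrom g = M.sqrt.acceptsFrom f := by
      simp only [B, S, Finset.mem_image, Finset.mem_filter, Finset.mem_univ, true_and]
      rintro _ ⟨⟨i, j⟩, hij, rfl⟩
      refine ⟨F.piecewise (fun _ => i) (fun _ => j), ?_, M.acceptsFrom_sqrt_piecewise_comm i j⟩
      rintro ⟨⟨i', j'⟩, hij', heq⟩
      obtain ⟨rfl, rfl⟩ : (j', i') = (i, j) := hinj heq
      exact lt_asymm hij hij'
    simpa [hBcard, Fintype.card_fun] using Set.ncard_range_le_card_sub _ B hmerge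
  · push Not at hF
    have hF' : ∀ p q, p ∈ F ↔ q ∈ F := fun p q => by
      by_cases hp : p ∈ F
      · exact iff_of_true hp (hF p hp q)
      · exact ⟨(absurd · hp), fun hq => absurd (hF q hq p) hp⟩
    have hconst : M.sqrt.acceptsFrom = fun _ => M.sqrt.acceptsFrom id := by
      funext f
      ext w
      simp only [mem_acceptsFrom_sqrt]
      exact hF' _ _
    have : Nonempty (σ → σ) := ⟨id⟩
    rw [hconst, range_const, ncard_singleton]
    have := Nat.choose_two_lt_pow_self (Fintype.card σ)
    omega

end DFA

theorem stmt6_general (n : ℕ) (Γ : Type) (L : Language Γ)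
    (hreg : ∃ m, recognizedBy L m) (hsc : sc L ≤ n) :
    sc (sqrtLang L) ≤ n ^ n - n * (n - 1) / 2 := by
  obtain ⟨M, rfl⟩ := recognizedBy_of_sc_le hreg hsc
  apply Nat.sInf_le
  rw [← M.accepts_sqrt]
  apply recognizedBy_of_ncard_range_acceptsFrom_le
  simpa [Nat.choose_two_right] using M.ncard_range_acceptsFrom_sqrt_le

/-- for `n > 2` and any regular language `L` over a finite alphabet with
`sc L ≤ n`, we have `sc (√L) ≤ n^n - n(n-1)/2`. -/
theorem stmt6 (n : ℕ) (hn : 2 < n) (Γ : Type) [Fintype Γ] (L : Language Γ)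
    (hreg : ∃ m, recognizedBy L m) (hsc : sc L ≤ n) :
    sc (sqrtLang L) ≤ n ^ n - n * (n - 1) / 2 :=
  stmt6_general n Γ L hreg hsc
end

section
/- Let n > 2 be an integer and set F = {n−1} ⊆ Fin n. For a ≠ b in Fin n define g_{a,b} : Fin n → Fin n by g_{a,b}(x) = a if x = n−1 and g_{a,b}(x) = b otherwise. Let g, g′ : Fin n → Fin n be distinct functions such that there exist no a ≠ b with g = g_{a,b} and g′ = g_{b,a}. Then there exists a function h : Fin n → Fin n such that exactly one of the two conditions h(g(h(g(0)))) = n−1 and h(g′(h(g′(0)))) = n−1 holds. (Equivalently, in the DFA with states Fin n → Fin n, alphabet Fin n → Fin n, initial state the identity, transition δ(g, f) = f ∘ g, and final states {g | g(g(0)) = n−1}, the states g and g′ are separable.) -/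
/-!
In the automaton, reading the letter `h` in state `g` leads to `h ∘ g`, which is final iff
`h (g (h (g 0))) = n - 1`; so it suffices to build one separating letter `h`.
If `g 0 = g' 0`, pick `w` with `g w ≠ g' w` and let `h` send `g 0` to `w` and exactly one of
`g w`, `g' w` to `n - 1`. If `a := g 0 ≠ b := g' 0`, then `h` is free on the two points `a`, `b`,
and a short case analysis produces a separating `h` unless `g` is `b` at `n - 1` and `a`
elsewhere while `g'` is `a` at `n - 1` and `b` elsewhere — the excluded pair.
-/

variable {α : Type*}

def SeparableByLetter (z t : α) (g g' : α → α) : Prop :=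
  ∃ h : α → α, Xor' (h (g (h (g z))) = t) (h (g' (h (g' z))) = t)

theorem exists_apply_eq_and_xor {s t p q : α} (hst : s ≠ t) (hpq : p ≠ q) (c w : α) :
    ∃ h : α → α, h c = w ∧ Xor' (h p = t) (h q = t) := by
  classical
  wlog hqc : q ≠ c generalizing p q
  · obtain ⟨h, hc, hx⟩ := this hpq.symm (by rintro rfl; exact hqc hpq.symm)
    exact ⟨h, hc, hx.symm⟩
  let f := Function.update (fun _ => s) c w
  refine ⟨Function.update f q (if f p = t then s else t), ?_, ?_⟩
  · rw [Function.update_of_ne hqc.symm]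
    exact Function.update_self (f := fun _ => s) c w
  · rw [Function.update_of_ne hpq, Function.update_self]
    by_cases hp : f p = t <;> simp [hp, hst, Xor']

namespace SeparableByLetter

variable {z t : α} {g g' : α → α}

theorem symm (hs : SeparableByLetter z t g g') : SeparableByLetter z t g' g :=
  let ⟨h, hx⟩ := hs
  ⟨h, hx.symm⟩

theorem of_apply_start_eq (hzt : z ≠ t) (hne : g ≠ g') (hz : g z = g' z) :
    SeparableByLetter z t g g' := by
  obtain ⟨w, hw⟩ := Function.ne_iff.mp hne
  obtain ⟨h, hc, hx⟩ := exists_apply_eq_and_xor hzt hw (g z) w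
  exact ⟨h, by rwa [← hz, hc]⟩

theorem of_apply_ne_starts (hzt : z ≠ t) (hab : g z ≠ g' z) {u : α} (hua : g u ≠ g z)
    (hub : g u ≠ g' z) : SeparableByLetter z t g g' := by
  classical
  refine ⟨fun x => if x = g z then u else if x = g' z then z else if x = g u then t else z,
    Or.inl ⟨?_, ?_⟩⟩ <;> simp [hab.symm, hua, hub, hzt]

theorem of_apply_final_ne (hzt : z ≠ t) (hab : g z ≠ g' z) (ht : g t ≠ g' z) :
    SeparableByLetter z t g g' := by
  classical
  refine ⟨fun x => if x = g' z then z else t, Or.inl ⟨?_, ?_⟩⟩ <;> simp [hab, ht, hzt]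

theorem of_apply_eq_start (hab : g z ≠ g' z) (ht : g' t = g z) {u : α} (hut : u ≠ t)
    (hu : g u = g' z) : SeparableByLetter z t g g' := by
  classical
  refine ⟨fun x => if x = g z then u else if x = g' z then t else z, Or.inl ⟨?_, ?_⟩⟩ <;>
    simp [hab.symm, ht, hu, hut]

theorem apply_eq_ite_of_not_separable [DecidableEq α] (hzt : z ≠ t) (hab : g z ≠ g' z)
    (hs : ¬ SeparableByLetter z t g g') (x : α) : g x = if x = t then g' z else g z := by
  have ht : g t = g' z := by_contra fun h => hs (of_apply_final_ne hzt hab h)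
  have ht' : g' t = g z := by_contra fun h => hs (of_apply_final_ne hzt hab.symm h).symm
  split_ifs with hx
  · rwa [hx]
  by_contra hxa
  have hxb : g x = g' z := by_contra fun h => hs (of_apply_ne_starts hzt hab hxa h)
  exact hs (of_apply_eq_start hab ht' hx hxb)

theorem of_not_exists_swap [DecidableEq α] (hzt : z ≠ t) (hne : g ≠ g')
    (hno : ¬ ∃ a b : α, a ≠ b ∧ (∀ x, g x = if x = t then a else b) ∧
      (∀ x, g' x = if x = t then b else a)) :
    SeparableByLetter z t g g' := by
  by_cases hz : g z = g' z
  · exact of_apply_start_eq hzt hne hz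
  by_contra hs
  exact hno ⟨g' z, g z, Ne.symm hz, apply_eq_ite_of_not_separable hzt hz hs,
    apply_eq_ite_of_not_separable hzt (Ne.symm hz) (mt symm hs)⟩

end SeparableByLetter

/-- in the square-root monster automaton with `F = {n-1}`, any two distinct
states `g ≠ g'` that do not form a pair `(g_{a,b}, g_{b,a})` are separable. -/
theorem stmt7 (n : ℕ) (hn : 2 < n) (g g' : Fin n → Fin n) (hne : g ≠ g')
    (hno : ¬ ∃ a b : Fin n, a ≠ b ∧
      (∀ x, g x = if x = (⟨n - 1, by omega⟩ : Fin n) then a else b) ∧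
      (∀ x, g' x = if x = (⟨n - 1, by omega⟩ : Fin n) then b else a)) :
    ∃ h : Fin n → Fin n,
      Xor' (h (g (h (g ⟨0, by omega⟩))) = (⟨n - 1, by omega⟩ : Fin n))
           (h (g' (h (g' ⟨0, by omega⟩))) = (⟨n - 1, by omega⟩ : Fin n)) :=
  SeparableByLetter.of_not_exists_swap (by simp only [ne_eq, Fin.mk.injEq]; omega) hne hno
end

section
/- Let n > 2 be an integer. Every submonoid of the monoid of all functions from Fin n to Fin n (under composition) that is generated by two elements is a proper submonoid; that is, for all f, g : Fin n → Fin n, the submonoid generated by {f, g} is not the whole monoid Fin n → Fin n. -/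
/-!
Over a finite set a composite `a ∘ b` is bijective only if both `a` and `b` are, so the
bijections lying in the submonoid generated by `S` are already generated by the bijections in
`S`. If `{f, g}` generated every map, one generator would have to be non-bijective (the
constant maps are not bijections), so the other one alone would generate all permutations.
But a monoid generated by one element is commutative, while the transpositions `(a b)` and
`(b c)` do not commute once there are three points.
-/

namespace Function.End

variable {α : Type*}

theorem bijective_mul_iff [Finite α] {a b : Function.End α} :
    Bijective (a * b) ↔ Bijective a ∧ Bijective b := by
  refine ⟨fun hab => ⟨?_, ?_⟩, fun ⟨ha, hb⟩ => ha.comp hb⟩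
  · exact Finite.surjective_iff_bijective.1 (Surjective.of_comp (g := b) hab.2)
  · exact Finite.injective_iff_bijective.1 (Injective.of_comp (f := a) hab.1)

theorem mem_closure_bijective_of_mem_closure [Finite α] {S : Set (Function.End α)}
    {h : Function.End α} (hS : h ∈ Submonoid.closure S) (hh : Bijective h) :
    h ∈ Submonoid.closure {x ∈ S | Bijective x} := by
  induction hS using Submonoid.closure_induction with
  | mem x hx => exact Submonoid.subset_closure ⟨hx, hh⟩
  | one => exact Submonoid.one_mem _
  | mul a b _ _ iha ihb =>
    obtain ⟨ha, hb⟩ := bijective_mul_iff.1 hh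
    exact Submonoid.mul_mem _ (iha ha) (ihb hb)

theorem bijective_of_mem_closure {S : Set (Function.End α)} (hS : ∀ x ∈ S, Bijective x)
    {h : Function.End α} (hh : h ∈ Submonoid.closure S) : Bijective h := by
  induction hh using Submonoid.closure_induction with
  | mem x hx => exact hS x hx
  | one => exact bijective_id
  | mul x y _ _ hx hy => exact hx.comp hy

theorem exists_not_bijective_of_closure_eq_top [Nontrivial α] {S : Set (Function.End α)}
    (hS : Submonoid.closure S = ⊤) : ∃ x ∈ S, ¬ Bijective x := by
  by_contra! hbij
  obtain ⟨a, b, hab⟩ := exists_pair_ne α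
  have hconst :=
    bijective_of_mem_closure hbij (hS ▸ Submonoid.mem_top (M := Function.End α) fun _ => a)
  exact hab (hconst.1 rfl)

theorem not_commute_swap_swap [DecidableEq α] {a b c : α} (hab : a ≠ b) (hac : a ≠ c)
    (hbc : b ≠ c) :
    ¬ Commute (S := Function.End α) ⇑(Equiv.swap a b) ⇑(Equiv.swap b c) := by
  intro h
  have hb : Equiv.swap a b (Equiv.swap b c b) = Equiv.swap b c (Equiv.swap a b b) :=
    congrFun h.eq b
  rw [Equiv.swap_apply_left, Equiv.swap_apply_right,
    Equiv.swap_apply_of_ne_of_ne hac.symm hbc.symm, Equiv.swap_apply_of_ne_of_ne hab hac] at hb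
  exact hac hb.symm

theorem closure_pair_ne_top_of_not_bijective [Fintype α] (hα : 2 < Fintype.card α)
    {f : Function.End α} (g : Function.End α) (hf : ¬ Bijective f) :
    Submonoid.closure {f, g} ≠ ⊤ := by
  classical
  intro htop
  have hperm (h : Function.End α) (hh : Bijective h) : h ∈ Submonoid.closure {g} := by
    refine Submonoid.closure_mono ?_
      (mem_closure_bijective_of_mem_closure (htop ▸ Submonoid.mem_top h) hh)
    rintro x ⟨rfl | rfl, hx⟩
    exacts [absurd hx hf, rfl]
  obtain ⟨a, b, c, hab, hac, hbc⟩ := Fintype.two_lt_card_iff.1 hα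
  obtain ⟨k, hk⟩ := Submonoid.mem_closure_singleton.1 (hperm _ (Equiv.swap a b).bijective)
  obtain ⟨m, hm⟩ := Submonoid.mem_closure_singleton.1 (hperm _ (Equiv.swap b c).bijective)
  exact not_commute_swap_swap hab hac hbc (hk ▸ hm ▸ Commute.pow_pow_self g k m)

theorem closure_pair_ne_top [Fintype α] (hα : 2 < Fintype.card α) (f g : Function.End α) :
    Submonoid.closure {f, g} ≠ ⊤ := by
  have : Nontrivial α := Fintype.one_lt_card_iff_nontrivial.1 (by omega)
  intro htop
  obtain ⟨x, hx, hxbij⟩ := exists_not_bijective_of_closure_eq_top htop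
  rcases hx with rfl | rfl
  · exact closure_pair_ne_top_of_not_bijective hα g hxbij htop
  · exact closure_pair_ne_top_of_not_bijective hα f hxbij (Set.pair_comm x f ▸ htop)

end Function.End

/-- for `n > 2`, no two functions generate the full transformation monoid
`Fin n → Fin n` (under composition): the submonoid generated by any two elements is
proper. -/
theorem stmt9 (n : ℕ) (hn : 2 < n) (f g : Function.End (Fin n)) :
    Submonoid.closure {f, g} ≠ ⊤ :=
  Function.End.closure_pair_ne_top (by rwa [Fintype.card_fin]) f g
end

section
/- Let n ≥ 2 be an integer and let i ≠ j be elements of Fin n. The monoid of all functions from Fin n to Fin n (under composition) is generated by the three elements: the transposition (0,1) (exchanging 0 and 1 and fixing all other points), the n-cycle (0,1,…,n−1) (sending k to k+1 mod n), and the contraction (i→j) (the map sending i to j and fixing all other points). That is, the submonoid generated by these three maps is the whole monoid Fin n → Fin n. -/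
/-! The `n`-cycle and the adjacent transposition generate the symmetric group, and since that group
is finite, they already generate it as a monoid. Conjugating the contraction `i ↦ j` by
permutations yields every contraction `a ↦ b`. Finally, a map `f` that is not a permutation has
`f a = f b` for some `a ≠ b` and misses some point `c`; then `f = update f a c ∘ (a ↦ b)`, and
`update f a c` has a strictly larger range, so induction on the size of the range reduces every
map to a permutation. -/

open Equiv Function Set

section collapse

variable {α : Type*} [DecidableEq α]

-- Typed `α → α`, not `Function.End α`, so that `simp` sees through compositions with it.
def collapse (a b : α) : α → α := fun x => if x = a then b else x

theorem perm_comp_collapse_comp_symm (σ : Perm α) (a b : α) :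
    ⇑σ ∘ collapse a b ∘ ⇑σ.symm = collapse (σ a) (σ b) := by
  funext x
  by_cases hx : x = σ a <;> simp [collapse, hx, symm_apply_eq]

theorem Equiv.Perm.exists_apply_eq_and_apply_eq_s10 {a b c d : α} (hab : a ≠ b) (hcd : c ≠ d) :
    ∃ σ : Perm α, σ a = c ∧ σ b = d := by
  have hb : swap a c b ≠ c := by
    simpa using (swap a c).injective.ne hab.symm
  refine ⟨(swap a c).trans (swap (swap a c b) d), ?_, by simp⟩
  simp [swap_apply_of_ne_of_ne hb.symm hcd]

theorem update_comp_collapse {f : α → α} {a b : α} (hab : f a = f b) (hne : a ≠ b) (c : α) :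
    update f a c ∘ collapse a b = f := by
  funext x
  by_cases hx : x = a <;> simp [collapse, hx, hab, hne.symm]

theorem range_ssubset_range_update {f : α → α} {a b c : α} (hab : f a = f b) (hne : a ≠ b)
    (hc : c ∉ range f) : range f ⊂ range (update f a c) := by
  refine ssubset_of_subset_not_subset ?_ fun h => hc (h ⟨a, update_self a c f⟩)
  simpa [update_comp_collapse hab hne c] using range_comp_subset_range (collapse a b) (update f a c)

end collapse

theorem Equiv.Perm.coe_mem_of_mclosure_eq_top {α : Type*} {s : Set (Perm α)}
    (hs : Submonoid.closure s = ⊤) {M : Submonoid (Function.End α)}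
    (hM : ∀ σ ∈ s, (⇑σ : Function.End α) ∈ M) (σ : Perm α) : (⇑σ : Function.End α) ∈ M := by
  have := (Submonoid.closure_le (S := M.comap (MulAction.toEndHom : Perm α →* _))).2 hM
  rw [hs] at this
  exact this (Submonoid.mem_top σ)

theorem Equiv.Perm.mclosure_cycle_adjacent_swap {α : Type*} [Fintype α] [DecidableEq α]
    {σ : Perm α} (h1 : σ.IsCycle) (h2 : σ.support = Finset.univ) (x : α) :
    Submonoid.closure ({σ, swap x (σ x)} : Set (Perm α)) = ⊤ := by
  rw [← Subgroup.closure_toSubmonoid_of_finite, closure_cycle_adjacent_swap h1 h2,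
    Subgroup.top_toSubmonoid]

theorem coe_finRotate_eq_mod (n : ℕ) :
    ⇑(finRotate n) = fun k : Fin n => ⟨(k + 1) % n, Nat.mod_lt _ k.pos⟩ := by
  funext k
  have := k.neZero
  ext
  simp [finRotate_apply, Fin.val_add]

namespace Function.End

variable {α : Type*} [DecidableEq α] [Finite α] {M : Submonoid (Function.End α)}

theorem mem_of_perm_mem_of_collapse_mem (hperm : ∀ σ : Perm α, (⇑σ : Function.End α) ∈ M)
    (hcol : ∀ a b : α, a ≠ b → collapse a b ∈ M) (f : Function.End α) : f ∈ M := by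
  by_cases hf : Surjective f
  · exact hperm (Equiv.ofBijective f (Finite.surjective_iff_bijective.1 hf))
  obtain ⟨c, hc⟩ : ∃ c, c ∉ range f := not_forall.1 hf
  obtain ⟨a, b, hab, hne⟩ : ∃ a b, f a = f b ∧ a ≠ b := by
    simpa [Injective] using mt Finite.injective_iff_surjective.1 hf
  have hlt := ncard_lt_ncard (range_ssubset_range_update hab hne hc)
  rw [← update_comp_collapse hab hne c]
  exact M.mul_mem (mem_of_perm_mem_of_collapse_mem hperm hcol (update f a c)) (hcol a b hne)
termination_by Nat.card α - (range f).ncard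
decreasing_by have := ncard_le_card (range (update f a c)); omega

theorem eq_top_of_perm_mem_of_collapse_mem (hperm : ∀ σ : Perm α, (⇑σ : Function.End α) ∈ M)
    {i j : α} (hij : i ≠ j) (hcol : collapse i j ∈ M) : M = ⊤ := by
  refine eq_top_iff.2 fun f _ => mem_of_perm_mem_of_collapse_mem hperm (fun a b hab => ?_) f
  obtain ⟨σ, rfl, rfl⟩ := Perm.exists_apply_eq_and_apply_eq_s10 hij hab
  rw [← perm_comp_collapse_comp_symm σ i j]
  exact M.mul_mem (hperm σ) (M.mul_mem hcol (hperm σ.symm))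

end Function.End

/-- for `n ≥ 2` and `i ≠ j` in `Fin n`, the full transformation monoid
`Fin n → Fin n` (under composition) is generated by the transposition `(0,1)`, the
`n`-cycle `k ↦ k+1 mod n`, and the contraction sending `i` to `j` and fixing all other
points. -/
theorem stmt10 (n : ℕ) (hn : 2 ≤ n) (i j : Fin n) (hij : i ≠ j) :
    Submonoid.closure
      ({ (Equiv.swap (⟨0, by omega⟩ : Fin n) (⟨1, by omega⟩ : Fin n) : Fin n → Fin n),
         (fun k : Fin n => (⟨(k.val + 1) % n, Nat.mod_lt _ (by omega)⟩ : Fin n)),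
         (fun x : Fin n => if x = i then j else x) } : Set (Function.End (Fin n))) = ⊤ := by
  have hswap : finRotate n ⟨0, by omega⟩ = ⟨1, by omega⟩ := by
    rw [coe_finRotate_eq_mod]
    exact Fin.ext (Nat.mod_eq_of_lt hn)
  refine Function.End.eq_top_of_perm_mem_of_collapse_mem
    (Perm.coe_mem_of_mclosure_eq_top (Perm.mclosure_cycle_adjacent_swap
      (isCycle_finRotate_of_le hn) (support_finRotate_of_le hn) ⟨0, by omega⟩) ?_)
    hij (Submonoid.subset_closure (mem_insert_of_mem _ (mem_insert_of_mem _ rfl)))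
  rintro σ (rfl | rfl)
  · rw [coe_finRotate_eq_mod]
    exact Submonoid.subset_closure (mem_insert_of_mem _ (mem_insert _ _))
  · rw [hswap]
    exact Submonoid.subset_closure (mem_insert _ _)
end

section
/- Let n > 2 be an integer and let Σ be an alphabet with at most two letters. For every regular language L over Σ with sc(L) = n, the square root satisfies the strict inequality sc(√L) < n^n − n(n−1)/2. -/
open Function Equiv
open scoped Nat

namespace Nat

theorem two_mul_factorial_le_pow {n : ℕ} (hn : 3 ≤ n) : 2 * n ! ≤ n ^ n := by
  obtain ⟨m, rfl⟩ : ∃ m, n = m + 1 := ⟨n - 1, by omega⟩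
  have hdesc : (m + 1).descFactorial m < (m + 1) ^ m :=
    descFactorial_lt_pow (succ_ne_zero m) (by omega)
  have hfac : (m + 1)! = (m + 1).descFactorial m := by
    rw [← descFactorial_self, descFactorial_succ, Nat.add_sub_cancel_left, one_mul]
  rw [hfac, pow_succ]
  nlinarith

theorem choose_two_lt_factorial {n : ℕ} (hn : 3 ≤ n) : n.choose 2 < n ! := by
  obtain ⟨m, rfl⟩ : ∃ m, n = m + 2 := ⟨n - 2, by omega⟩
  have hfac : (m + 2)! = (m + 2) * (m + 1) * m ! := by rw [factorial_succ, factorial_succ]; ring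
  rw [choose_two_right, hfac, show m + 2 - 1 = m + 1 by omega]
  have := Nat.mul_le_mul_left ((m + 2) * (m + 1)) (factorial_pos m)
  have hP : 0 < (m + 2) * (m + 1) := by positivity
  generalize (m + 2) * (m + 1) = P at *
  omega

theorem choose_two_lt_factorial_div_two {n : ℕ} (hn : 4 ≤ n) : n.choose 2 < n ! / 2 := by
  obtain ⟨m, rfl⟩ : ∃ m, n = m + 2 := ⟨n - 2, by omega⟩
  have hfac : (m + 2)! = (m + 2) * (m + 1) * m ! := by rw [factorial_succ, factorial_succ]; ring
  rw [choose_two_right, hfac, show m + 2 - 1 = m + 1 by omega]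
  have := Nat.mul_le_mul_left ((m + 2) * (m + 1)) (factorial_le (by omega : 2 ≤ m))
  rw [factorial_two] at this
  have hP : 0 < (m + 2) * (m + 1) := by positivity
  generalize (m + 2) * (m + 1) = P at *
  omega

theorem factorial_add_choose_two_lt_pow {n : ℕ} (hn : 3 ≤ n) : n ! + n.choose 2 < n ^ n := by
  have := choose_two_lt_factorial hn
  have := two_mul_factorial_le_pow hn
  omega

end Nat

theorem Equiv.Perm.orderOf_le_factorial_div_two {σ : Type*} [Finite σ] (hσ : 3 ≤ Nat.card σ)
    (π : Perm σ) : orderOf π ≤ (Nat.card σ)! / 2 := by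
  have hdvd : orderOf π ∣ (Nat.card σ)! := Nat.card_perm (α := σ) ▸ orderOf_dvd_natCard π
  have hne : orderOf π ≠ (Nat.card σ)! := fun h => by
    have := isCyclic_of_orderOf_eq_card π (h.trans Nat.card_perm.symm)
    have := Perm.isCyclic_iff_card_le_two.mp this
    omega
  have : ¬ (Nat.card σ)! < 2 * orderOf π := fun hlt =>
    hne (Nat.eq_of_dvd_of_lt_two_mul (Nat.factorial_ne_zero _) hdvd hlt).symm
  omega

theorem Function.ncard_setOf_bijective {σ : Type*} [Finite σ] :
    {f : σ → σ | Bijective f}.ncard = (Nat.card σ)! := by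
  rw [← Nat.card_perm, ← Nat.card_coe_set_eq]
  exact Nat.card_congr Equiv.bijectiveEquiv

theorem Function.ncard_compl_setOf_bijective {σ : Type*} [Finite σ] :
    {f : σ → σ | Bijective f}ᶜ.ncard = Nat.card σ ^ Nat.card σ - (Nat.card σ)! := by
  rw [Set.ncard_compl, ncard_setOf_bijective, Nat.card_fun]

theorem eq_of_ne_of_ne_of_card_le_two {α : Type*} [Finite α] (hα : Nat.card α ≤ 2)
    {x y z : α} (hxz : x ≠ z) (hyz : y ≠ z) : x = y := by
  by_contra hxy
  have := (Set.two_lt_ncard_iff (s := Set.univ)).2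
    ⟨x, y, z, trivial, trivial, trivial, hxy, hxz, hyz⟩
  rw [Set.ncard_univ] at this
  omega

theorem sc_accepts_le_card {α : Type} {σ : Type*} [Finite σ] (M : DFA α σ) :
    sc M.accepts ≤ Nat.card σ := by
  have := Fintype.ofFinite σ
  rw [Nat.card_eq_fintype_card]
  exact Nat.sInf_le ⟨DFA.reindex (Fintype.equivFin σ) M, DFA.accepts_reindex _ _⟩

theorem sc_le_ncard_range_leftQuotient {α : Type} {L : Language α}
    (h : (Set.range L.leftQuotient).Finite) : sc L ≤ (Set.range L.leftQuotient).ncard := by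
  have := h.to_subtype
  simpa [L.accepts_toDFA] using sc_accepts_le_card L.toDFA

namespace DFA

section Transformation

variable {α σ : Type*} (M : DFA α σ)

def transformation (w : List α) (q : σ) : σ := M.evalFrom q w

theorem transformation_cons (a : α) (w : List α) :
    M.transformation (a :: w) = M.transformation w ∘ (M.step · a) := rfl

theorem bijective_transformation (h : ∀ a, Bijective (M.step · a)) (w : List α) :
    Bijective (M.transformation w) := by
  induction w with
  | nil => exact bijective_id
  | cons a w ih => exact ih.comp (h a)

theorem exists_perm_of_card_le_two [Finite α] (hα : Nat.card α ≤ 2)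
    (h : ¬ ∀ a, Bijective (M.step · a)) :
    ∃ π : Perm σ, ∀ a, Bijective (M.step · a) → (M.step · a) = π := by
  obtain ⟨a₀, ha₀⟩ := not_forall.mp h
  by_cases hex : ∃ a₁, Bijective (M.step · a₁)
  · obtain ⟨a₁, ha₁⟩ := hex
    refine ⟨Equiv.ofBijective _ ha₁, fun a ha => ?_⟩
    obtain rfl : a = a₁ := eq_of_ne_of_ne_of_card_le_two hα (z := a₀)
      (fun h => ha₀ (h ▸ ha)) (fun h => ha₀ (h ▸ ha₁))
    rfl
  · exact ⟨1, fun a ha => absurd ⟨a, ha⟩ hex⟩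

def sqrtQuotient (f : σ → σ) : Language α :=
  {v | M.transformation v (f (M.transformation v (f M.start))) ∈ M.accept}

end Transformation

theorem leftQuotient_sqrtLang_accepts {α : Type} {σ : Type*} (M : DFA α σ) (w : List α) :
    (sqrtLang M.accepts).leftQuotient w = M.sqrtQuotient (M.transformation w) := by
  ext v
  change M.evalFrom M.start (w ++ v ++ (w ++ v)) ∈ M.accept ↔ _
  simp only [evalFrom_of_append]
  rfl

theorem sc_sqrtLang_accepts_le {α : Type} {σ : Type*} [Finite σ] (M : DFA α σ) :
    sc (sqrtLang M.accepts) ≤ (M.sqrtQuotient '' Set.range M.transformation).ncard := by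
  have hrange : Set.range (sqrtLang M.accepts).leftQuotient =
      M.sqrtQuotient '' Set.range M.transformation := by
    rw [← Set.range_comp]
    exact congrArg Set.range (funext M.leftQuotient_sqrtLang_accepts)
  rw [← hrange]
  exact sc_le_ncard_range_leftQuotient (hrange ▸ (Set.toFinite _).image _)

section Bijective

variable {α σ : Type*} [Finite σ] (M : DFA α σ)

theorem bijective_step_of_bijective_transformation_cons {a : α} {w : List α}
    (h : Bijective (M.transformation (a :: w))) :
    Bijective (M.step · a) ∧ Bijective (M.transformation w) := by
  rw [transformation_cons] at h
  exact ⟨Finite.injective_iff_bijective.mp (Injective.of_comp h.1),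
    Finite.surjective_iff_bijective.mp (Surjective.of_comp h.2)⟩

theorem exists_pow_eq_transformation {π : Perm σ}
    (hπ : ∀ a, Bijective (M.step · a) → (M.step · a) = π) {w : List α}
    (hw : Bijective (M.transformation w)) : ∃ k : ℕ, ⇑(π ^ k) = M.transformation w := by
  induction w with
  | nil => exact ⟨0, rfl⟩
  | cons a w ih =>
    obtain ⟨ha, hw⟩ := M.bijective_step_of_bijective_transformation_cons hw
    obtain ⟨k, hk⟩ := ih hw
    exact ⟨k + 1, by rw [transformation_cons, ← hk, hπ a ha, pow_succ, Perm.coe_mul]⟩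

theorem ncard_bijective_transformations_le {π : Perm σ}
    (hπ : ∀ a, Bijective (M.step · a) → (M.step · a) = π) :
    (Set.range M.transformation ∩ {f | Bijective f}).ncard ≤ orderOf π := by
  have hsub : Set.range M.transformation ∩ {f | Bijective f} ⊆
      (⇑) '' (Subgroup.zpowers π : Set (Perm σ)) := by
    rintro _ ⟨⟨w, rfl⟩, hw⟩
    obtain ⟨k, hk⟩ := M.exists_pow_eq_transformation hπ hw
    exact ⟨π ^ k, Subgroup.npow_mem_zpowers π k, hk⟩
  calc _ ≤ _ := Set.ncard_le_ncard hsub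
    _ ≤ (Subgroup.zpowers π : Set (Perm σ)).ncard := Set.ncard_image_le
    _ = orderOf π := Nat.card_zpowers π

theorem ncard_transformations_le_of_forall_bijective (h : ∀ a, Bijective (M.step · a)) :
    (Set.range M.transformation).ncard ≤ (Nat.card σ)! :=
  ncard_setOf_bijective (σ := σ) ▸
    Set.ncard_le_ncard (Set.range_subset_iff.2 (M.bijective_transformation h))

theorem ncard_nonbijective_transformations_le :
    (Set.range M.transformation \ {f | Bijective f}).ncard ≤
      Nat.card σ ^ Nat.card σ - (Nat.card σ)! :=
  ncard_compl_setOf_bijective (σ := σ) ▸ Set.ncard_le_ncard fun _ hf => hf.2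

theorem ncard_transformations_le (hσ : 3 ≤ Nat.card σ) {π : Perm σ}
    (hπ : ∀ a, Bijective (M.step · a) → (M.step · a) = π) :
    (Set.range M.transformation).ncard ≤
      (Nat.card σ)! / 2 + (Set.range M.transformation \ {f | Bijective f}).ncard := by
  rw [← Set.ncard_inter_add_ncard_sdiff_eq_ncard (Set.range M.transformation) {f | Bijective f}]
  have := (M.ncard_bijective_transformations_le hπ).trans (π.orderOf_le_factorial_div_two hσ)
  omega

end Bijective

/-- For two states `a ≠ b` with `p a = p b` and the third state `c`, the first map sends `c`
to `b` and everything else to `a`; the second one exchanges the roles of `a` and `b`. -/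
def mergingPair (p : Fin 3 → Bool) : (Fin 3 → Fin 3) × (Fin 3 → Fin 3) :=
  if p 0 = p 1 then (![0, 0, 1], ![1, 1, 0])
  else if p 0 = p 2 then (![0, 2, 0], ![2, 0, 2])
  else (![2, 1, 1], ![1, 2, 2])

theorem mergingPair_spec : ∀ p : Fin 3 → Bool,
    ¬ Bijective (mergingPair p).1 ∧ ¬ Bijective (mergingPair p).2 ∧
      (mergingPair p).1 ≠ (mergingPair p).2 ∧
      ∀ (h : Fin 3 → Fin 3) (q : Fin 3), p (h ((mergingPair p).1 (h ((mergingPair p).1 q)))) =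
        p (h ((mergingPair p).2 (h ((mergingPair p).2 q)))) := by
  decide

section ThreeStates

variable {α : Type*} (M : DFA α (Fin 3))

theorem exists_ne_sqrtQuotient_eq : ∃ f g : Fin 3 → Fin 3,
    ¬ Bijective f ∧ ¬ Bijective g ∧ f ≠ g ∧ M.sqrtQuotient f = M.sqrtQuotient g := by
  classical
  obtain ⟨hf, hg, hfg, hp⟩ := mergingPair_spec fun q => decide (q ∈ M.accept)
  refine ⟨_, _, hf, hg, hfg, Set.ext fun v => ?_⟩
  simpa [sqrtQuotient] using hp (M.transformation v) M.start

theorem ncard_sqrtQuotients_le_of_three {π : Perm (Fin 3)}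
    (hπ : ∀ a, Bijective (M.step · a) → (M.step · a) = π) :
    (M.sqrtQuotient '' Set.range M.transformation).ncard ≤ 23 := by
  have hT := M.ncard_transformations_le (by simp) hπ
  have hN := M.ncard_nonbijective_transformations_le
  set T := Set.range M.transformation
  simp only [Nat.card_fin, Nat.factorial] at hT hN
  by_cases hfull : {f : Fin 3 → Fin 3 | Bijective f}ᶜ ⊆ T
  · obtain ⟨f, g, hf, hg, hfg, hquot⟩ := M.exists_ne_sqrtQuotient_eq
    have : (M.sqrtQuotient '' T).ncard ≠ T.ncard := fun h =>
      hfg (Set.injOn_of_ncard_image_eq h (Set.toFinite _) (hfull hf) (hfull hg) hquot)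
    have := Set.ncard_image_le (f := M.sqrtQuotient) (s := T)
    omega
  · have hsub : T \ {f | Bijective f} ⊆ {f : Fin 3 → Fin 3 | Bijective f}ᶜ :=
      fun _ hf => hf.2
    have hlt := Set.ncard_lt_ncard
      (hsub.ssubset_of_not_subset fun h => hfull fun _ hf => (h hf).1)
    rw [ncard_compl_setOf_bijective] at hlt
    simp only [Nat.card_fin, Nat.factorial] at hlt
    have := Set.ncard_image_le (f := M.sqrtQuotient) (s := T)
    omega

end ThreeStates

theorem ncard_sqrtQuotients_lt {α : Type*} [Finite α] (hα : Nat.card α ≤ 2) {n : ℕ}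
    (hn : 3 ≤ n) (M : DFA α (Fin n)) :
    (M.sqrtQuotient '' Set.range M.transformation).ncard < n ^ n - n.choose 2 := by
  have himage := Set.ncard_image_le (f := M.sqrtQuotient) (s := Set.range M.transformation)
  by_cases hbij : ∀ a, Bijective (M.step · a)
  · have := M.ncard_transformations_le_of_forall_bijective hbij
    have := Nat.factorial_add_choose_two_lt_pow hn
    rw [Nat.card_fin] at *
    omega
  obtain ⟨π, hπ⟩ := M.exists_perm_of_card_le_two hα hbij
  obtain rfl | hn4 := eq_or_lt_of_le hn
  · exact (M.ncard_sqrtQuotients_le_of_three hπ).trans_lt (by decide)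
  · have := M.ncard_transformations_le (by simpa using hn) hπ
    have := M.ncard_nonbijective_transformations_le
    have := Nat.choose_two_lt_factorial_div_two hn4
    have := Nat.factorial_le_pow n
    rw [Nat.card_fin] at *
    omega

end DFA

/-- for `n > 2` and any regular language `L` over an alphabet with at most
two letters with `sc L = n`, the bound for the square root is not attained:
`sc (√L) < n^n - n(n-1)/2`. -/
theorem stmt12 (n : ℕ) (hn : 2 < n) (Γ : Type) [Fintype Γ]
    (hΓ : Fintype.card Γ ≤ 2) (L : Language Γ)
    (hreg : ∃ m, recognizedBy L m) (hsc : sc L = n) :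
    sc (sqrtLang L) < n ^ n - n * (n - 1) / 2 := by
  obtain ⟨M, rfl⟩ : recognizedBy L n := hsc ▸ (Nat.sInf_mem hreg : recognizedBy L (sc L))
  rw [← Nat.choose_two_right]
  exact M.sc_sqrtLang_accepts_le.trans_lt
    (M.ncard_sqrtQuotients_lt (Nat.card_eq_fintype_card (α := Γ) ▸ hΓ) hn)
end
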